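/- arXiv:2510.03961 — 8 statements merged into one kernel-verified Lean document; each statement's English description precedes it below -/
import Mathlib

section
/- Let ℓ be a local modulus of continuity that is a Dini function, and let ε ∈ (0, 1/4]. Then there exists a local modulus of continuity ℓ̃ that is a Dini function and is twice differentiable on (0,1] with r·ℓ̃'(r) + |r²·ℓ̃''(r)| ≤ C·ℓ̃(r) for all r ∈ (0,1] for some constant C > 0, such that ℓ(r) ≤ ℓ̃(r) for all r ∈ (0,1] and ℓ̃(r)/ℓ̃(s) ≤ (r/s)^ε for all 0 < s ≤ r ≤ 1. -/
open MeasureTheory Set Filter intervalIntegral Real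

namespace Stmt5Aux

noncomputable def Ifun (ε : ℝ) (g : ℝ → ℝ) (r : ℝ) : ℝ := ∫ s in r..1, g s * s ^ (-1 - ε)

noncomputable def Tfun (ε : ℝ) (g : ℝ → ℝ) (r : ℝ) : ℝ := r ^ ε * (g 1 / ε + Ifun ε g r)

noncomputable def Dfun (g : ℝ → ℝ) : ℝ := ∫ s in Ioc (0:ℝ) 1, g s / s

structure OK (ε : ℝ) (g : ℝ → ℝ) : Prop where
  pos : ∀ r ∈ Ioc (0:ℝ) 1, 0 < g r
  mono : ∀ s ∈ Ioc (0:ℝ) 1, ∀ r ∈ Ioc (0:ℝ) 1, s ≤ r → g s ≤ g r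
  lim : Tendsto g (nhdsWithin 0 (Ioi 0)) (nhds 0)
  dini : IntegrableOn (fun s => g s / s) (Ioc (0:ℝ) 1)
  ii : ∀ a b : ℝ, 0 < a → 0 < b → IntervalIntegrable (fun s => g s * s ^ (-1 - ε)) volume a b

variable {ε : ℝ} {g : ℝ → ℝ}

lemma rpow_cont_on {a b : ℝ} (ha : 0 < a) (hb : 0 < b) (q : ℝ) :
    ContinuousOn (fun s : ℝ => s ^ q) (uIcc a b) := by
  apply ContinuousOn.rpow_const continuousOn_id
  intro x hx
  left
  rcases hx with ⟨h1, _⟩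
  have : (0:ℝ) < min a b := lt_min ha hb
  exact (lt_of_lt_of_le this h1).ne'

lemma const_ii {a b : ℝ} (ha : 0 < a) (hb : 0 < b) (C q : ℝ) :
    IntervalIntegrable (fun s : ℝ => C * s ^ q) volume a b := by
  apply ContinuousOn.intervalIntegrable
  exact (continuousOn_const).mul (rpow_cont_on ha hb q)

lemma integral_rpow_aux (hε : 0 < ε) {a b : ℝ} (ha : 0 < a) (hab : a ≤ b) :
    ∫ s in a..b, s ^ (-1 - ε) = (a ^ (-ε) - b ^ (-ε)) / ε := by
  rw [integral_rpow]
  · have h1 : -1 - ε + 1 = -ε := by ring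
    rw [h1, div_neg, ← neg_div, neg_sub]
  · right
    constructor
    · intro h; nlinarith
    · intro h
      rcases h with ⟨h1, _⟩
      have : (0:ℝ) < min a b := by
        rw [min_eq_left hab]; exact ha
      linarith [h1, this]


lemma mem_pos_of_Icc {r x : ℝ} (hr : r ∈ Ioc (0:ℝ) 1) (hx : x ∈ Icc r 1) :
    x ∈ Ioc (0:ℝ) 1 := ⟨lt_of_lt_of_le hr.1 hx.1, hx.2⟩

lemma Ifun_nonneg (h : OK ε g) {r : ℝ} (hr : r ∈ Ioc (0:ℝ) 1) : 0 ≤ Ifun ε g r := by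
  apply intervalIntegral.integral_nonneg hr.2
  intro x hx
  have hx' := mem_pos_of_Icc hr hx
  exact mul_nonneg (h.pos x hx').le (rpow_nonneg hx'.1.le _)

lemma Ifun_lower (hε : 0 < ε) (h : OK ε g) {r : ℝ} (hr : r ∈ Ioc (0:ℝ) 1) :
    g r * ((r ^ (-ε) - 1) / ε) ≤ Ifun ε g r := by
  have key : ∫ s in r..1, g r * s ^ (-1 - ε) ≤ Ifun ε g r := by
    apply intervalIntegral.integral_mono_on hr.2
    · exact const_ii hr.1 one_pos _ _
    · exact h.ii r 1 hr.1 one_pos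
    · intro x hx
      have hx' := mem_pos_of_Icc hr hx
      have h1 : g r ≤ g x := h.mono r hr x hx' hx.1
      have h2 : (0:ℝ) ≤ x ^ (-1 - ε) := rpow_nonneg (le_of_lt hx'.1) _
      exact mul_le_mul_of_nonneg_right h1 h2
  calc g r * ((r ^ (-ε) - 1) / ε) = ∫ s in r..1, g r * s ^ (-1 - ε) := by
        rw [intervalIntegral.integral_const_mul, integral_rpow_aux hε hr.1 hr.2,
          Real.one_rpow]
    _ ≤ Ifun ε g r := key

lemma Ifun_diff (h : OK ε g) {s r : ℝ} (hs : 0 < s) (hr : 0 < r) :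
    Ifun ε g s - Ifun ε g r = ∫ t in s..r, g t * t ^ (-1 - ε) := by
  have := intervalIntegral.integral_add_adjacent_intervals
    (h.ii s r hs hr) (h.ii r 1 hr one_pos)
  unfold Ifun
  linarith [this]

lemma Ifun_diff_upper (hε : 0 < ε) (h : OK ε g) {s r : ℝ} (hs : s ∈ Ioc (0:ℝ) 1)
    (hr : r ∈ Ioc (0:ℝ) 1) (hsr : s ≤ r) :
    Ifun ε g s - Ifun ε g r ≤ g r * ((s ^ (-ε) - r ^ (-ε)) / ε) := by
  rw [Ifun_diff h hs.1 hr.1]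
  have key : ∫ t in s..r, g t * t ^ (-1 - ε) ≤ ∫ t in s..r, g r * t ^ (-1 - ε) := by
    apply intervalIntegral.integral_mono_on hsr
    · exact (h.ii s r hs.1 hr.1)
    · exact const_ii hs.1 hr.1 _ _
    · intro x hx
      have hx' : x ∈ Ioc (0:ℝ) 1 := ⟨lt_of_lt_of_le hs.1 hx.1, le_trans hx.2 hr.2⟩
      have h1 : g x ≤ g r := h.mono x hx' r hr hx.2
      have h2 : (0:ℝ) ≤ x ^ (-1 - ε) := rpow_nonneg (le_of_lt hx'.1) _
      exact mul_le_mul_of_nonneg_right h1 h2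
  calc ∫ t in s..r, g t * t ^ (-1 - ε) ≤ ∫ t in s..r, g r * t ^ (-1 - ε) := key
    _ = g r * ((s ^ (-ε) - r ^ (-ε)) / ε) := by
        rw [intervalIntegral.integral_const_mul, integral_rpow_aux hε hs.1 hsr]

lemma Ifun_anti (h : OK ε g) {s r : ℝ} (hs : s ∈ Ioc (0:ℝ) 1) (hr : r ∈ Ioc (0:ℝ) 1)
    (hsr : s ≤ r) : Ifun ε g r ≤ Ifun ε g s := by
  have h1 := Ifun_diff h (ε := ε) hs.1 hr.1
  have h2 : (0:ℝ) ≤ ∫ t in s..r, g t * t ^ (-1 - ε) := by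
    apply intervalIntegral.integral_nonneg hsr
    intro x hx
    have hx' : x ∈ Ioc (0:ℝ) 1 := ⟨lt_of_lt_of_le hs.1 hx.1, le_trans hx.2 hr.2⟩
    exact mul_nonneg (h.pos x hx').le (rpow_nonneg hx'.1.le _)
  linarith


lemma rpow_mul_neg {r : ℝ} (hr : 0 < r) (q : ℝ) : r ^ q * r ^ (-q) = 1 := by
  rw [← Real.rpow_add hr]; simp

lemma Tfun_pos (hε : 0 < ε) (h : OK ε g) {r : ℝ} (hr : r ∈ Ioc (0:ℝ) 1) :
    0 < Tfun ε g r := by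
  have h1 : (0:ℝ) < r ^ ε := rpow_pos_of_pos hr.1 ε
  have h2 : 0 < g 1 := h.pos 1 ⟨one_pos, le_refl 1⟩
  have h3 := Ifun_nonneg h hr
  have : 0 < g 1 / ε := div_pos h2 hε
  unfold Tfun
  positivity

lemma Tfun_mono (hε : 0 < ε) (h : OK ε g) :
    ∀ s ∈ Ioc (0:ℝ) 1, ∀ r ∈ Ioc (0:ℝ) 1, s ≤ r → Tfun ε g s ≤ Tfun ε g r := by
  intro s hs r hr hsr
  have hεne : ε ≠ 0 := hε.ne'
  have hxa := rpow_mul_neg hr.1 ε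
  have hyb := rpow_mul_neg hs.1 ε
  have hyx : s ^ ε ≤ r ^ ε := rpow_le_rpow hs.1.le hsr hε.le
  have hy0 : (0:ℝ) < s ^ ε := rpow_pos_of_pos hs.1 ε
  have hgr1 : g r ≤ g 1 := h.mono r hr 1 ⟨one_pos, le_refl 1⟩ hr.2
  have hIlow : g r * (r ^ (-ε) - 1) ≤ ε * Ifun ε g r := by
    have := Ifun_lower hε h hr
    rw [mul_div_assoc'] at this
    rw [div_le_iff₀ hε] at this
    linarith
  have hIdiff : ε * (Ifun ε g s - Ifun ε g r) ≤ g r * (s ^ (-ε) - r ^ (-ε)) := by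
    have := Ifun_diff_upper hε h hs hr hsr
    rw [mul_div_assoc', le_div_iff₀ hε] at this
    linarith
  apply le_of_mul_le_mul_left _ hε
  have h0 : ε * (g 1 / ε) = g 1 := by field_simp
  have e1 : ε * (Tfun ε g s) = s ^ ε * (g 1 + ε * Ifun ε g s) := by
    unfold Tfun; linear_combination (s ^ ε) * h0
  have e2 : ε * (Tfun ε g r) = r ^ ε * (g 1 + ε * Ifun ε g r) := by
    unfold Tfun; linear_combination (r ^ ε) * h0
  rw [e1, e2]
  have h1 : s ^ ε * (ε * (Ifun ε g s) - ε * (Ifun ε g r)) ≤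
      s ^ ε * (g r * (s ^ (-ε) - r ^ (-ε))) := by
    apply mul_le_mul_of_nonneg_left _ hy0.le
    linarith
  have h2 : (r ^ ε - s ^ ε) * (g r * (r ^ (-ε) - 1)) ≤ (r ^ ε - s ^ ε) * (ε * Ifun ε g r) :=
    mul_le_mul_of_nonneg_left hIlow (by linarith)
  have h3 : (r ^ ε - s ^ ε) * g r ≤ (r ^ ε - s ^ ε) * g 1 :=
    mul_le_mul_of_nonneg_left hgr1 (by linarith)
  have hxa' : r ^ ε * r ^ (-ε) * g r = g r := by rw [hxa]; ring
  have hyb' : s ^ ε * s ^ (-ε) * g r = g r := by rw [hyb]; ring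
  set u := r ^ ε
  set v := s ^ ε
  set a' := r ^ (-ε)
  set b' := s ^ (-ε)
  clear_value u v a' b'
  linarith

lemma Tfun_dom (hε : 0 < ε) (h : OK ε g) {r : ℝ} (hr : r ∈ Ioc (0:ℝ) 1) :
    g r ≤ ε * Tfun ε g r := by
  have hεne : ε ≠ 0 := hε.ne'
  have hxa := rpow_mul_neg hr.1 ε
  have hx0 : (0:ℝ) < r ^ ε := rpow_pos_of_pos hr.1 ε
  have hx1 : r ^ ε ≤ 1 := rpow_le_one hr.1.le hr.2 hε.le
  have hgr1 : g r ≤ g 1 := h.mono r hr 1 ⟨one_pos, le_refl 1⟩ hr.2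
  have hIlow : g r * (r ^ (-ε) - 1) ≤ ε * Ifun ε g r := by
    have := Ifun_lower hε h hr
    rw [mul_div_assoc', div_le_iff₀ hε] at this
    linarith
  have h0 : ε * (g 1 / ε) = g 1 := by field_simp
  have e2 : ε * (Tfun ε g r) = r ^ ε * (g 1 + ε * Ifun ε g r) := by
    unfold Tfun; linear_combination (r ^ ε) * h0
  rw [e2]
  have h2 : r ^ ε * (g r * (r ^ (-ε) - 1)) ≤ r ^ ε * (ε * Ifun ε g r) :=
    mul_le_mul_of_nonneg_left hIlow hx0.le
  have h3 : r ^ ε * g r ≤ r ^ ε * g 1 := mul_le_mul_of_nonneg_left hgr1 hx0.le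
  have hxa' : r ^ ε * r ^ (-ε) * g r = g r := by rw [hxa]; ring
  have hgpos := h.pos r hr
  set u := r ^ ε
  set a' := r ^ (-ε)
  clear_value u a'
  nlinarith [h2, h3, hxa', hgpos, hx1]

lemma Tfun_key (hε : 0 < ε) (h : OK ε g) {s r : ℝ} (hs : s ∈ Ioc (0:ℝ) 1)
    (hr : r ∈ Ioc (0:ℝ) 1) (hsr : s ≤ r) :
    Tfun ε g r * s ^ ε ≤ Tfun ε g s * r ^ ε := by
  have hA : g 1 / ε + Ifun ε g r ≤ g 1 / ε + Ifun ε g s := by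
    linarith [Ifun_anti h hs hr hsr]
  have hApos : 0 < g 1 / ε + Ifun ε g r := by
    have := div_pos (h.pos 1 ⟨one_pos, le_refl 1⟩) hε
    linarith [Ifun_nonneg h hr]
  have hx0 : (0:ℝ) < r ^ ε := rpow_pos_of_pos hr.1 ε
  have hy0 : (0:ℝ) < s ^ ε := rpow_pos_of_pos hs.1 ε
  unfold Tfun
  nlinarith [mul_le_mul_of_nonneg_left hA (mul_pos hx0 hy0).le]

lemma Tfun_ratio (hε : 0 < ε) (h : OK ε g) :
    ∀ s r : ℝ, 0 < s → s ≤ r → r ≤ 1 → Tfun ε g r / Tfun ε g s ≤ (r / s) ^ ε := by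
  intro s r hs0 hsr hr1
  have hs : s ∈ Ioc (0:ℝ) 1 := ⟨hs0, le_trans hsr hr1⟩
  have hr : r ∈ Ioc (0:ℝ) 1 := ⟨lt_of_lt_of_le hs0 hsr, hr1⟩
  have hTs := Tfun_pos hε h hs
  rw [Real.div_rpow hr.1.le hs.1.le]
  rw [div_le_div_iff₀ hTs (rpow_pos_of_pos hs0 ε)]
  have := Tfun_key hε h hs hr hsr
  linarith [this]

lemma Tfun_almost (hε : 0 < ε) (hε1 : ε ≤ 1) (h : OK ε g) :
    ∀ s ∈ Ioc (0:ℝ) 1, ∀ r ∈ Ioc (0:ℝ) 1, s ≤ r →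
      Tfun ε g r / r ≤ 1 * (Tfun ε g s / s) := by
  intro s hs r hr hsr
  rw [one_mul, div_le_div_iff₀ hr.1 hs.1]
  have key : r ^ ε * s ≤ s ^ ε * r := by
    have h1 : (r / s) ^ ε ≤ (r / s) ^ (1:ℝ) := by
      apply rpow_le_rpow_of_exponent_le _ hε1
      rw [le_div_iff₀ hs.1]; linarith
    rw [rpow_one, Real.div_rpow hr.1.le hs.1.le] at h1
    rw [div_le_div_iff₀ (rpow_pos_of_pos hs.1 ε) hs.1] at h1
    linarith
  have hA : g 1 / ε + Ifun ε g r ≤ g 1 / ε + Ifun ε g s := by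
    linarith [Ifun_anti h hs hr hsr]
  have hApos : 0 < g 1 / ε + Ifun ε g r := by
    have := div_pos (h.pos 1 ⟨one_pos, le_refl 1⟩) hε
    linarith [Ifun_nonneg h hr]
  have hyr : (0:ℝ) ≤ s ^ ε * r := by
    have h1 : (0:ℝ) < s ^ ε := rpow_pos_of_pos hs.1 ε
    nlinarith [hr.1]
  have := mul_le_mul key hA hApos.le hyr
  unfold Tfun
  nlinarith [this]

lemma Dfun_nonneg (h : OK ε g) : 0 ≤ Dfun g := by
  apply setIntegral_nonneg measurableSet_Ioc
  intro x hx
  have := h.pos x hx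
  have := hx.1
  positivity

lemma sqrt_mem {r : ℝ} (hr : r ∈ Ioc (0:ℝ) 1) :
    Real.sqrt r ∈ Ioc (0:ℝ) 1 ∧ r ≤ Real.sqrt r := by
  have h0 : 0 < Real.sqrt r := Real.sqrt_pos.2 hr.1
  have h1 : Real.sqrt r ≤ 1 := by
    rw [show (1:ℝ) = Real.sqrt 1 by simp]
    exact Real.sqrt_le_sqrt hr.2
  have h2 : r ≤ Real.sqrt r := by
    nlinarith [Real.sq_sqrt hr.1.le, Real.sqrt_nonneg r, hr.2]
  exact ⟨⟨h0, h1⟩, h2⟩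

lemma dini_ii (h : OK ε g) {a b : ℝ} (ha : 0 < a) (hb : b ≤ 1) (hab : a ≤ b) :
    IntervalIntegrable (fun t => g t / t) volume a b := by
  apply IntegrableOn.intervalIntegrable
  apply h.dini.mono_set
  rw [uIcc_of_le hab]
  intro x hx
  exact ⟨lt_of_lt_of_le ha hx.1, le_trans hx.2 hb⟩

lemma Ifun_upper (hε : 0 < ε) (h : OK ε g) {r : ℝ} (hr : r ∈ Ioc (0:ℝ) 1) :
    Ifun ε g r ≤ g (Real.sqrt r) * r ^ (-ε) / ε + r ^ (-(ε/2)) * Dfun g := by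
  obtain ⟨hm, hrm⟩ := sqrt_mem hr
  set m := Real.sqrt r with hmdef
  have hsplit : Ifun ε g r - Ifun ε g m = ∫ t in r..m, g t * t ^ (-1 - ε) :=
    Ifun_diff h hr.1 hm.1
  have hgm : 0 ≤ g m := (h.pos m hm).le
  -- first piece
  have hb1 : ∫ t in r..m, g t * t ^ (-1 - ε) ≤ g m * r ^ (-ε) / ε := by
    have step : ∫ t in r..m, g t * t ^ (-1 - ε) ≤ ∫ t in r..m, g m * t ^ (-1 - ε) := by
      apply intervalIntegral.integral_mono_on hrm
      · exact h.ii r m hr.1 hm.1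
      · exact const_ii hr.1 hm.1 _ _
      · intro x hx
        have hx' : x ∈ Ioc (0:ℝ) 1 := ⟨lt_of_lt_of_le hr.1 hx.1, le_trans hx.2 hm.2⟩
        exact mul_le_mul_of_nonneg_right (h.mono x hx' m hm hx.2)
          (rpow_nonneg hx'.1.le _)
    have comp : ∫ t in r..m, g m * t ^ (-1 - ε) = g m * ((r ^ (-ε) - m ^ (-ε)) / ε) := by
      rw [intervalIntegral.integral_const_mul, integral_rpow_aux hε hr.1 hrm]
    have hmnn : 0 ≤ m ^ (-ε) := rpow_nonneg hm.1.le _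
    have hlast : g m * ((r ^ (-ε) - m ^ (-ε)) / ε) ≤ g m * (r ^ (-ε) / ε) := by
      apply mul_le_mul_of_nonneg_left _ hgm
      gcongr
      linarith
    rw [mul_div_assoc]
    linarith [step, comp, hlast]
  -- second piece
  have hb2 : Ifun ε g m ≤ r ^ (-(ε/2)) * Dfun g := by
    have hmexp : m ^ (-ε) = r ^ (-(ε/2)) := by
      rw [hmdef, Real.sqrt_eq_rpow, ← Real.rpow_mul hr.1.le]
      congr 1
      ring
    have step : Ifun ε g m ≤ ∫ t in m..1, (g t / t) * m ^ (-ε) := by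
      apply intervalIntegral.integral_mono_on hm.2 (h.ii m 1 hm.1 one_pos)
        ((dini_ii h hm.1 le_rfl hm.2).mul_const _)
      intro x hx
      have hx' : x ∈ Ioc (0:ℝ) 1 := ⟨lt_of_lt_of_le hm.1 hx.1, hx.2⟩
      have hgx := (h.pos x hx').le
      have hx0 := hx'.1
      have heq : g x * x ^ (-1 - ε) = (g x / x) * x ^ (-ε) := by
        rw [show (-1 - ε) = (-1) + (-ε) by ring, Real.rpow_add hx0, Real.rpow_neg_one]
        ring
      rw [heq]
      exact mul_le_mul_of_nonneg_left
        (rpow_le_rpow_of_nonpos hm.1 hx.1 (neg_nonpos.2 hε.le))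
        (div_nonneg hgx hx0.le)
    have step2 : ∫ t in m..1, (g t / t) * m ^ (-ε) = (∫ t in m..1, g t / t) * m ^ (-ε) :=
      intervalIntegral.integral_mul_const _ _
    have step3 : ∫ t in m..1, g t / t ≤ Dfun g := by
      rw [intervalIntegral.integral_of_le hm.2]
      unfold Dfun
      apply setIntegral_mono_set h.dini
      · rw [EventuallyLE, ae_restrict_iff' measurableSet_Ioc]
        apply ae_of_all
        intro x hx
        have := (h.pos x hx).le
        have := hx.1
        positivity
      · exact HasSubset.Subset.eventuallyLE (Ioc_subset_Ioc_left hm.1.le)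
    have step4 : (∫ t in m..1, g t / t) * m ^ (-ε) ≤ Dfun g * m ^ (-ε) :=
      mul_le_mul_of_nonneg_right step3 (rpow_nonneg hm.1.le _)
    rw [hmexp] at step4 step2 step
    nlinarith [step, step4, step2, mul_comm (Dfun g) (r ^ (-(ε/2)))]
  linarith [hsplit, hb1, hb2]

lemma Tfun_upper (hε : 0 < ε) (h : OK ε g) {r : ℝ} (hr : r ∈ Ioc (0:ℝ) 1) :
    Tfun ε g r ≤ g 1 / ε * r ^ ε + g (Real.sqrt r) / ε + r ^ (ε/2) * Dfun g := by
  have hIu := Ifun_upper hε h hr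
  have hx0 : (0:ℝ) < r ^ ε := rpow_pos_of_pos hr.1 ε
  have h1 : r ^ ε * (g 1 / ε + Ifun ε g r) ≤
      r ^ ε * (g 1 / ε + (g (Real.sqrt r) * r ^ (-ε) / ε + r ^ (-(ε/2)) * Dfun g)) :=
    mul_le_mul_of_nonneg_left (by linarith) hx0.le
  have e1 : r ^ ε * r ^ (-ε) = 1 := rpow_mul_neg hr.1 ε
  have e2 : r ^ ε * r ^ (-(ε/2)) = r ^ (ε/2) := by
    rw [← Real.rpow_add hr.1]
    congr 1
    ring
  unfold Tfun
  calc r ^ ε * (g 1 / ε + Ifun ε g r)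
      ≤ r ^ ε * (g 1 / ε + (g (Real.sqrt r) * r ^ (-ε) / ε + r ^ (-(ε/2)) * Dfun g)) := h1
    _ = g 1 / ε * r ^ ε + (r ^ ε * r ^ (-ε)) * (g (Real.sqrt r) / ε)
        + (r ^ ε * r ^ (-(ε/2))) * Dfun g := by ring
    _ = g 1 / ε * r ^ ε + g (Real.sqrt r) / ε + r ^ (ε/2) * Dfun g := by
        rw [e1, e2]; ring

lemma tendsto_rpow_zero (q : ℝ) (hq : 0 < q) :
    Tendsto (fun r : ℝ => r ^ q) (nhdsWithin 0 (Ioi 0)) (nhds 0) := by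
  have hc : ContinuousAt (fun r : ℝ => r ^ q) 0 :=
    Real.continuousAt_rpow_const 0 q (Or.inr hq.le)
  have h2 : Tendsto (fun r : ℝ => r ^ q) (nhdsWithin 0 (Ioi 0)) (nhds ((0:ℝ) ^ q)) :=
    hc.tendsto.mono_left (nhdsWithin_le_nhds (s := Ioi 0))
  rwa [Real.zero_rpow hq.ne'] at h2

lemma tendsto_sqrt_zero :
    Tendsto Real.sqrt (nhdsWithin (0:ℝ) (Ioi 0)) (nhdsWithin (0:ℝ) (Ioi 0)) := by
  rw [tendsto_nhdsWithin_iff]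
  constructor
  · have : Tendsto Real.sqrt (nhds 0) (nhds (Real.sqrt 0)) :=
      Real.continuous_sqrt.continuousAt
    simpa using this.mono_left nhdsWithin_le_nhds
  · filter_upwards [self_mem_nhdsWithin] with x hx
    exact Real.sqrt_pos.2 hx

lemma Tfun_lim (hε : 0 < ε) (h : OK ε g) :
    Tendsto (Tfun ε g) (nhdsWithin 0 (Ioi 0)) (nhds 0) := by
  apply squeeze_zero'
  · filter_upwards [Ioc_mem_nhdsGT_of_mem (Set.mem_Ico.2 ⟨le_refl (0:ℝ), one_pos⟩)] with
      r hr
    exact (Tfun_pos hε h hr).le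
  · filter_upwards [Ioc_mem_nhdsGT_of_mem (Set.mem_Ico.2 ⟨le_refl (0:ℝ), one_pos⟩)] with
      r hr
    exact Tfun_upper hε h hr
  · have t1 : Tendsto (fun r : ℝ => g 1 / ε * r ^ ε) (nhdsWithin 0 (Ioi 0)) (nhds 0) := by
      have := (tendsto_rpow_zero ε hε).const_mul (g 1 / ε)
      simpa using this
    have t2 : Tendsto (fun r : ℝ => g (Real.sqrt r) / ε) (nhdsWithin 0 (Ioi 0)) (nhds 0) := by
      have := (h.lim.comp tendsto_sqrt_zero).div_const ε
      simpa using this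
    have t3 : Tendsto (fun r : ℝ => r ^ (ε/2) * Dfun g) (nhdsWithin 0 (Ioi 0)) (nhds 0) := by
      have := (tendsto_rpow_zero (ε/2) (by linarith)).mul_const (Dfun g)
      simpa using this
    have := (t1.add t2).add t3
    simpa using this

lemma Ifun_eq_neg : Ifun ε g = fun b => -∫ x in (1:ℝ)..b, g x * x ^ (-1 - ε) := by
  funext b
  rw [← intervalIntegral.integral_symm]
  rfl

lemma Ifun_contAt (h : OK ε g) {r : ℝ} (hr : 0 < r) : ContinuousAt (Ifun ε g) r := by
  set m := min r 1 / 2 with hm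
  have hm0 : 0 < m := by positivity
  have hmr : m < r := by
    have : min r 1 ≤ r := min_le_left r 1
    have : min r 1 / 2 < r := by
      have := lt_min hr one_pos
      linarith [min_le_left r 1]
    exact this
  have hm1 : m ≤ 1 := by
    have := min_le_right r 1
    linarith
  have hmM : m ≤ r + 1 := by linarith
  have hInt := h.ii m (r + 1) hm0 (by linarith)
  have h1mem : (1:ℝ) ∈ uIcc m (r + 1) := by
    rw [uIcc_of_le hmM]
    exact ⟨hm1, by linarith⟩
  have hcont := intervalIntegral.continuousOn_primitive_interval' hInt h1mem
  have hnb : uIcc m (r + 1) ∈ nhds r := by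
    rw [uIcc_of_le hmM]
    exact Icc_mem_nhds hmr (by linarith)
  have hca := hcont.continuousAt hnb
  rw [Ifun_eq_neg]
  exact hca.neg

lemma Tfun_contOn (h : OK ε g) : ContinuousOn (Tfun ε g) (Ioi 0) := by
  intro r hr
  apply ContinuousAt.continuousWithinAt
  have h1 : ContinuousAt (fun x : ℝ => x ^ ε) r :=
    Real.continuousAt_rpow_const r ε (Or.inl (ne_of_gt hr))
  exact h1.mul (continuousAt_const.add (Ifun_contAt h hr))

lemma integrand_contAt (hc : ∀ x ∈ Ioi (0:ℝ), ContinuousAt g x) {r : ℝ} (hr : 0 < r) :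
    ContinuousAt (fun s => g s * s ^ (-1 - ε)) r :=
  (hc r hr).mul (Real.continuousAt_rpow_const r _ (Or.inl (ne_of_gt hr)))

lemma Ifun_hasDeriv (h : OK ε g) (hc : ∀ x ∈ Ioi (0:ℝ), ContinuousAt g x) {r : ℝ}
    (hr : 0 < r) : HasDerivAt (Ifun ε g) (-(g r * r ^ (-1 - ε))) r := by
  have hmeas : StronglyMeasurableAtFilter (fun s => g s * s ^ (-1 - ε)) (nhds r) volume := by
    apply ContinuousAt.stronglyMeasurableAtFilter (s := Ioi (0:ℝ)) isOpen_Ioi _ r hr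
    intro x hx
    exact integrand_contAt hc hx
  have hD := intervalIntegral.integral_hasDerivAt_right (h.ii 1 r one_pos hr) hmeas
    (integrand_contAt hc hr)
  rw [Ifun_eq_neg]
  exact hD.neg

lemma Tfun_hasDeriv (hε : 0 < ε) (h : OK ε g) (hc : ∀ x ∈ Ioi (0:ℝ), ContinuousAt g x)
    {r : ℝ} (hr : 0 < r) :
    HasDerivAt (Tfun ε g) (ε * Tfun ε g r / r - g r / r) r := by
  have h1 : HasDerivAt (fun x : ℝ => x ^ ε) (ε * r ^ (ε - 1)) r :=
    Real.hasDerivAt_rpow_const (Or.inl (ne_of_gt hr))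
  have h2 : HasDerivAt (fun x => g 1 / ε + Ifun ε g x) (-(g r * r ^ (-1 - ε))) r :=
    (Ifun_hasDeriv h hc hr).const_add (g 1 / ε)
  have h3 := h1.mul h2
  have heq : ε * r ^ (ε - 1) * (g 1 / ε + Ifun ε g r) + r ^ ε * -(g r * r ^ (-1 - ε)) =
      ε * Tfun ε g r / r - g r / r := by
    have e1 : r ^ (ε - 1) = r ^ ε / r := Real.rpow_sub_one (ne_of_gt hr) ε
    have e2 : r ^ ε * r ^ (-1 - ε) = r⁻¹ := by
      rw [← Real.rpow_add hr]
      rw [show ε + (-1 - ε) = -1 by ring, Real.rpow_neg_one]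
    unfold Tfun
    rw [show r ^ ε * -(g r * r ^ (-1 - ε)) = -(g r) * (r ^ ε * r ^ (-1 - ε)) by ring, e2,
      e1]
    field_simp
    ring
  rw [heq] at h3
  exact h3

lemma rpow_integrable (q : ℝ) (hq : -1 < q) : IntegrableOn (fun r : ℝ => r ^ q) (Ioc 0 1) := by
  have h1 := intervalIntegral.intervalIntegrable_rpow' (a := (0:ℝ)) (b := 1) hq
  rwa [intervalIntegrable_iff, uIoc_of_le (by norm_num : (0:ℝ) ≤ 1)] at h1

lemma sqrt_term_integrable (h : OK ε g) :
    IntegrableOn (fun r : ℝ => g (Real.sqrt r) / r) (Ioc 0 1) := by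
  set f : ℝ → ℝ := (Ioc (0:ℝ) 1).indicator (fun u => g u / u) with hf
  have hfi : IntegrableOn f (Ioi (0:ℝ)) := by
    rw [hf, IntegrableOn, integrable_indicator_iff measurableSet_Ioc, IntegrableOn,
      Measure.restrict_restrict measurableSet_Ioc,
      Set.inter_eq_left.mpr Ioc_subset_Ioi_self]
    exact h.dini
  have key := (integrableOn_Ioi_comp_rpow_iff' f (p := (1:ℝ)/2) (by norm_num)).2 hfi
  have key2 := key.mono_set (Ioc_subset_Ioi_self : Ioc (0:ℝ) 1 ⊆ Ioi 0)
  apply key2.congr_fun _ measurableSet_Ioc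
  intro x hx
  have hx0 : (0:ℝ) < x := hx.1
  have hsq : x ^ ((1:ℝ)/2) = Real.sqrt x := (Real.sqrt_eq_rpow x).symm
  have hsqm : Real.sqrt x ∈ Ioc (0:ℝ) 1 := (sqrt_mem hx).1
  have hsq0 : (0:ℝ) < Real.sqrt x := hsqm.1
  have e1 : x ^ ((1:ℝ)/2 - 1) = Real.sqrt x / x := by
    rw [Real.rpow_sub_one hx0.ne', hsq]
  simp only [smul_eq_mul, hsq, e1, hf, indicator_of_mem hsqm]
  field_simp

lemma Tfun_dini (hε : 0 < ε) (h : OK ε g) :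
    IntegrableOn (fun r => Tfun ε g r / r) (Ioc (0:ℝ) 1) := by
  have hD := Dfun_nonneg h
  set B : ℝ → ℝ := fun r =>
    g 1 / ε * r ^ (ε - 1) + g (Real.sqrt r) / r / ε + Dfun g * r ^ (ε/2 - 1) with hB
  have hBint : IntegrableOn B (Ioc (0:ℝ) 1) := by
    apply Integrable.add
    apply Integrable.add
    · exact (rpow_integrable (ε - 1) (by linarith)).const_mul _
    · exact (sqrt_term_integrable h).div_const ε
    · exact (rpow_integrable (ε/2 - 1) (by linarith)).const_mul _
  apply Integrable.mono' hBint
  · apply ContinuousOn.aestronglyMeasurable _ measurableSet_Ioc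
    apply ContinuousOn.div
    · exact (Tfun_contOn h).mono (fun x hx => hx.1)
    · exact continuousOn_id
    · intro x hx; exact ne_of_gt hx.1
  · rw [ae_restrict_iff' measurableSet_Ioc]
    apply ae_of_all
    intro r hr
    rw [Real.norm_eq_abs, abs_of_nonneg (div_nonneg (Tfun_pos hε h hr).le hr.1.le)]
    have hup := Tfun_upper hε h hr
    have step : Tfun ε g r / r ≤
        (g 1 / ε * r ^ ε + g (Real.sqrt r) / ε + r ^ (ε/2) * Dfun g) / r := by
      gcongr
      exact hr.1.le
    have e1 : r ^ (ε - 1) = r ^ ε / r := Real.rpow_sub_one hr.1.ne' ε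
    have e2 : r ^ (ε/2 - 1) = r ^ (ε/2) / r := Real.rpow_sub_one hr.1.ne' (ε/2)
    have e3 : (g 1 / ε * r ^ ε + g (Real.sqrt r) / ε + r ^ (ε/2) * Dfun g) / r = B r := by
      simp only [hB]
      rw [e1, e2]
      ring
    rw [e3] at step
    exact step

lemma uIcc_subset_Ioi {a b : ℝ} (ha : 0 < a) (hb : 0 < b) : uIcc a b ⊆ Ioi 0 :=
  fun x hx => lt_of_lt_of_le (lt_min ha hb) hx.1

lemma Tfun_OK (hε : 0 < ε) (h : OK ε g) : OK ε (Tfun ε g) where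
  pos := fun r hr => Tfun_pos hε h hr
  mono := Tfun_mono hε h
  lim := Tfun_lim hε h
  dini := Tfun_dini hε h
  ii := fun a b ha hb => by
    apply ContinuousOn.intervalIntegrable
    exact ((Tfun_contOn h).mono (uIcc_subset_Ioi ha hb)).mul (rpow_cont_on ha hb _)

lemma Tfun_contAt (h : OK ε g) : ∀ x ∈ Ioi (0:ℝ), ContinuousAt (Tfun ε g) x := by
  intro r hr
  exact (Real.continuousAt_rpow_const r ε (Or.inl (ne_of_gt hr))).mul
    (continuousAt_const.add (Ifun_contAt h hr))

end Stmt5Aux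

open Stmt5Aux in
theorem stmt_5 (ℓ : ℝ → ℝ)
    (hpos : ∀ r ∈ Set.Ioc (0 : ℝ) 1, 0 < ℓ r)
    (hmono : ∀ s ∈ Set.Ioc (0 : ℝ) 1, ∀ r ∈ Set.Ioc (0 : ℝ) 1, s ≤ r → ℓ s ≤ ℓ r)
    (hlim : Filter.Tendsto ℓ (nhdsWithin 0 (Set.Ioi 0)) (nhds 0))
    (c : ℝ) (hc : 1 ≤ c)
    (halmost : ∀ s ∈ Set.Ioc (0 : ℝ) 1, ∀ r ∈ Set.Ioc (0 : ℝ) 1, s ≤ r →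
      ℓ r / r ≤ c * (ℓ s / s))
    (hdini : IntegrableOn (fun s => ℓ s / s) (Set.Ioc (0 : ℝ) 1))
    (ε : ℝ) (hε : ε ∈ Set.Ioc (0 : ℝ) (1 / 4)) :
    ∃ lt : ℝ → ℝ,
      (∀ r ∈ Set.Ioc (0 : ℝ) 1, 0 < lt r) ∧
      (∀ s ∈ Set.Ioc (0 : ℝ) 1, ∀ r ∈ Set.Ioc (0 : ℝ) 1, s ≤ r → lt s ≤ lt r) ∧
      Filter.Tendsto lt (nhdsWithin 0 (Set.Ioi 0)) (nhds 0) ∧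
      (∃ c' : ℝ, 1 ≤ c' ∧ ∀ s ∈ Set.Ioc (0 : ℝ) 1, ∀ r ∈ Set.Ioc (0 : ℝ) 1, s ≤ r →
        lt r / r ≤ c' * (lt s / s)) ∧
      IntegrableOn (fun s => lt s / s) (Set.Ioc (0 : ℝ) 1) ∧
      (∀ r ∈ Set.Ioc (0 : ℝ) 1, DifferentiableAt ℝ lt r ∧ DifferentiableAt ℝ (deriv lt) r) ∧
      (∃ C : ℝ, 0 < C ∧ ∀ r ∈ Set.Ioc (0 : ℝ) 1,
        r * deriv lt r + |r ^ 2 * deriv (deriv lt) r| ≤ C * lt r) ∧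
      (∀ r ∈ Set.Ioc (0 : ℝ) 1, ℓ r ≤ lt r) ∧
      (∀ s r : ℝ, 0 < s → s ≤ r → r ≤ 1 → lt r / lt s ≤ (r / s) ^ ε) := by
  obtain ⟨hε0, hε4⟩ := hε
  have hε1 : ε ≤ 1 := by linarith
  -- stage 0
  set g0 : ℝ → ℝ := fun s => ℓ (min s 1) with hg0
  have hg0eq : ∀ r ∈ Set.Ioc (0:ℝ) 1, g0 r = ℓ r := by
    intro r hr
    simp [hg0, min_eq_left hr.2]
  have hg0mem : ∀ x : ℝ, 0 < x → min x 1 ∈ Set.Ioc (0:ℝ) 1 :=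
    fun x hx => ⟨lt_min hx one_pos, min_le_right x 1⟩
  have hg0mono : MonotoneOn g0 (Set.Ioi (0:ℝ)) := by
    intro x hx y hy hxy
    exact hmono _ (hg0mem x hx) _ (hg0mem y hy) (min_le_min hxy le_rfl)
  have hOK0 : OK ε g0 := by
    constructor
    · intro r hr; rw [hg0eq r hr]; exact hpos r hr
    · intro s hs r hr hsr
      rw [hg0eq s hs, hg0eq r hr]; exact hmono s hs r hr hsr
    · apply hlim.congr'
      filter_upwards [Ioc_mem_nhdsGT_of_mem (Set.mem_Ico.2 ⟨le_refl (0:ℝ), one_pos⟩)]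
        with x hx
      exact (hg0eq x hx).symm
    · apply hdini.congr_fun _ measurableSet_Ioc
      intro x hx
      simp only [hg0eq x hx]
    · intro a b ha hb
      apply IntervalIntegrable.mul_continuousOn _ (rpow_cont_on ha hb _)
      exact (hg0mono.mono (uIcc_subset_Ioi ha hb)).intervalIntegrable
  -- stages 1, 2, 3
  set g1 : ℝ → ℝ := Tfun ε g0 with hg1
  have hOK1 : OK ε g1 := Tfun_OK hε0 hOK0
  have hc1 : ∀ x ∈ Set.Ioi (0:ℝ), ContinuousAt g1 x := Tfun_contAt hOK0
  set g2 : ℝ → ℝ := Tfun ε g1 with hg2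
  have hOK2 : OK ε g2 := Tfun_OK hε0 hOK1
  have hc2 : ∀ x ∈ Set.Ioi (0:ℝ), ContinuousAt g2 x := Tfun_contAt hOK1
  set lt3 : ℝ → ℝ := Tfun ε g2 with hlt3
  set D1 : ℝ → ℝ := fun r => ε * lt3 r / r - g2 r / r with hD1def
  have hD1 : ∀ r ∈ Set.Ioi (0:ℝ), HasDerivAt lt3 (D1 r) r := fun r hr =>
    Tfun_hasDeriv hε0 hOK2 hc2 hr
  have hderiv : ∀ r ∈ Set.Ioi (0:ℝ), deriv lt3 r = D1 r := fun r hr => (hD1 r hr).deriv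
  have hev : ∀ r ∈ Set.Ioi (0:ℝ), deriv lt3 =ᶠ[nhds r] D1 := by
    intro r hr
    filter_upwards [isOpen_Ioi.mem_nhds hr] with x hx using hderiv x hx
  have hD1d : ∀ r ∈ Set.Ioi (0:ℝ), HasDerivAt D1
      ((ε * D1 r * r - ε * lt3 r * 1) / r ^ 2
        - ((ε * g2 r / r - g1 r / r) * r - g2 r * 1) / r ^ 2) r := by
    intro r hr
    have hrne : (r:ℝ) ≠ 0 := ne_of_gt hr
    have h1 : HasDerivAt (fun x => ε * lt3 x) (ε * D1 r) r := (hD1 r hr).const_mul ε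
    have h2 : HasDerivAt g2 (ε * g2 r / r - g1 r / r) r := Tfun_hasDeriv hε0 hOK1 hc1 hr
    exact (h1.div (hasDerivAt_id' r) hrne).sub (h2.div (hasDerivAt_id' r) hrne)
  refine ⟨lt3, fun r hr => Tfun_pos hε0 hOK2 hr, Tfun_mono hε0 hOK2,
    Tfun_lim hε0 hOK2, ⟨1, le_refl 1, Tfun_almost hε0 hε1 hOK2⟩, Tfun_dini hε0 hOK2,
    ?_, ?_, ?_, Tfun_ratio hε0 hOK2⟩
  · -- differentiability
    intro r hr
    have hr' : r ∈ Set.Ioi (0:ℝ) := hr.1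
    exact ⟨(hD1 r hr').differentiableAt,
      (Filter.EventuallyEq.differentiableAt_iff (hev r hr')).2 (hD1d r hr').differentiableAt⟩
  · -- derivative bounds
    refine ⟨2, by norm_num, ?_⟩
    intro r hr
    have hr' : r ∈ Set.Ioi (0:ℝ) := hr.1
    have hrne : r ≠ 0 := ne_of_gt hr.1
    have hdd : deriv (deriv lt3) r = (ε * D1 r * r - ε * lt3 r * 1) / r ^ 2
        - ((ε * g2 r / r - g1 r / r) * r - g2 r * 1) / r ^ 2 := by
      rw [Filter.EventuallyEq.deriv_eq (hev r hr')]
      exact (hD1d r hr').deriv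
    have hd1 : deriv lt3 r = D1 r := hderiv r hr'
    rw [hd1, hdd]
    have hD1val : D1 r = (ε * lt3 r - g2 r) / r := by
      simp only [hD1def]; ring
    have hrd1 : r * D1 r = ε * lt3 r - g2 r := by
      rw [hD1val]; field_simp
    have hvshape : r ^ 2 * ((ε * D1 r * r - ε * lt3 r * 1) / r ^ 2
        - ((ε * g2 r / r - g1 r / r) * r - g2 r * 1) / r ^ 2)
        = ε * (ε * lt3 r) - ε * g2 r - ε * lt3 r - (ε * g2 r - g1 r) + g2 r := by
      rw [hD1val]; field_simp; ring
    rw [hvshape, hrd1]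
    have d1 : g1 r ≤ ε * g2 r := Tfun_dom hε0 hOK1 hr
    have d2 : g2 r ≤ ε * lt3 r := Tfun_dom hε0 hOK2 hr
    have p1 := Tfun_pos hε0 hOK0 hr
    have p2 := Tfun_pos hε0 hOK1 hr
    have p3 := Tfun_pos hε0 hOK2 hr
    have hεd2 : ε * g2 r ≤ ε * (ε * lt3 r) := mul_le_mul_of_nonneg_left d2 hε0.le
    have hε2 : ε * (ε * lt3 r) ≤ (1/4) * ((1/4) * lt3 r) := by nlinarith
    have habs : |ε * (ε * lt3 r) - ε * g2 r - ε * lt3 r - (ε * g2 r - g1 r) + g2 r|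
        ≤ 2 * lt3 r - (ε * lt3 r - g2 r) := by
      apply abs_le.mpr
      constructor
      · nlinarith
      · nlinarith
    linarith
  · -- domination
    intro r hr
    have d0 : g0 r ≤ ε * g1 r := Tfun_dom hε0 hOK0 hr
    have d1 : g1 r ≤ ε * g2 r := Tfun_dom hε0 hOK1 hr
    have d2 : g2 r ≤ ε * Tfun ε g2 r := Tfun_dom hε0 hOK2 hr
    have p1 := Tfun_pos hε0 hOK0 hr
    have p2 := Tfun_pos hε0 hOK1 hr
    have p3 := Tfun_pos hε0 hOK2 hr
    have := hg0eq r hr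
    nlinarith [d0, d1, d2, p1, p2, p3]
end

section
/- Let d ≥ 2 and let ℓ be a regular global modulus of continuity. Then Γ_ℓ is differentiable on ℝ^{d−1}, ∇Γ_ℓ(x̃) = ∇Γ_ℓ(ỹ) whenever x̃=(x₁,x̂) and ỹ=(y₁,ŷ) have x₁ = y₁, and there exists C > 1 such that |∇Γ_ℓ(x̃) − ∇Γ_ℓ(ỹ)| ≤ C·ℓ(|x₁ − y₁|) ≤ C·ℓ(|x̃ − ỹ|) for all x̃=(x₁,x̂), ỹ=(y₁,ŷ) ∈ ℝ^{d−1} with x₁ ≠ y₁. -/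
/-- `gEll ℓ t = t·ℓ(t)` for `t > 0`, and `0` for `t ≤ 0`. -/
noncomputable def gEll (ℓ : ℝ → ℝ) (t : ℝ) : ℝ := if 0 < t then t * ℓ t else 0

/-- `Γ_ℓ : ℝ^{m} → ℝ`, depending only on the first coordinate. -/
noncomputable def GammaMap (m : ℕ) (h0 : 0 < m) (ℓ : ℝ → ℝ)
    (x : EuclideanSpace ℝ (Fin m)) : ℝ := gEll ℓ (x ⟨0, h0⟩)

noncomputable def gd (ℓ : ℝ → ℝ) (t : ℝ) : ℝ := if 0 < t then ℓ t + t * deriv ℓ t else 0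

lemma gd_of_pos (ℓ : ℝ → ℝ) {t : ℝ} (ht : 0 < t) : gd ℓ t = ℓ t + t * deriv ℓ t := if_pos ht

lemma gd_of_nonpos (ℓ : ℝ → ℝ) {t : ℝ} (ht : ¬ 0 < t) : gd ℓ t = 0 := if_neg ht

lemma ell_deriv_nonneg (ℓ : ℝ → ℝ)
    (hmono : ∀ s r : ℝ, 0 < s → s ≤ r → ℓ s ≤ ℓ r)
    (hdiff1 : ∀ r : ℝ, 0 < r → DifferentiableAt ℝ ℓ r)
    {r : ℝ} (hr : 0 < r) : 0 ≤ deriv ℓ r := by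
  have h := (hdiff1 r hr).hasDerivAt
  rw [hasDerivAt_iff_tendsto_slope] at h
  have h2 : Filter.Tendsto (slope ℓ r) (nhdsWithin r (Set.Ioi r)) (nhds (deriv ℓ r)) :=
    h.mono_left (nhdsWithin_mono _ (fun y hy => ne_of_gt hy))
  refine ge_of_tendsto h2 ?_
  filter_upwards [self_mem_nhdsWithin] with y hy
  rw [slope_def_field]
  have hyr : r < y := hy
  exact div_nonneg (by linarith [hmono r y hr (le_of_lt hyr)]) (by linarith)

lemma hasDerivAt_gEll (ℓ : ℝ → ℝ)
    (hlim : Filter.Tendsto ℓ (nhdsWithin 0 (Set.Ioi 0)) (nhds 0))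
    (hdiff1 : ∀ r : ℝ, 0 < r → DifferentiableAt ℝ ℓ r)
    (t : ℝ) : HasDerivAt (gEll ℓ) (gd ℓ t) t := by
  rcases lt_trichotomy t 0 with ht | ht | ht
  · rw [gd_of_nonpos ℓ (by linarith)]
    have : HasDerivAt (fun _ : ℝ => (0:ℝ)) 0 t := hasDerivAt_const t 0
    refine this.congr_of_eventuallyEq ?_
    filter_upwards [Iio_mem_nhds ht] with y hy
    simp only [gEll, if_neg (not_lt_of_gt (show y < (0:ℝ) from hy))]
  · subst ht
    rw [gd_of_nonpos ℓ (lt_irrefl 0)]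
    rw [hasDerivAt_iff_tendsto_slope]
    rw [← nhdsLT_sup_nhdsGT (0:ℝ), Filter.tendsto_sup]
    constructor
    · have : ∀ᶠ y in nhdsWithin (0:ℝ) (Set.Iio 0), slope (gEll ℓ) 0 y = 0 := by
        filter_upwards [self_mem_nhdsWithin] with y hy
        rw [slope_def_field]
        simp [gEll, not_lt_of_gt (show y < (0:ℝ) from hy), lt_irrefl]
      exact Filter.Tendsto.congr' (Filter.EventuallyEq.symm this) tendsto_const_nhds
    · have : ∀ᶠ y in nhdsWithin (0:ℝ) (Set.Ioi 0), ℓ y = slope (gEll ℓ) 0 y := by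
        filter_upwards [self_mem_nhdsWithin] with y hy
        have hy' : (0:ℝ) < y := hy
        rw [slope_def_field]
        simp [gEll, hy', lt_irrefl]
        field_simp
      exact Filter.Tendsto.congr' this hlim
  · rw [gd_of_pos ℓ ht]
    have h1 : HasDerivAt (fun s : ℝ => s * ℓ s) (1 * ℓ t + t * deriv ℓ t) t :=
      (hasDerivAt_id t).mul (hdiff1 t ht).hasDerivAt
    rw [one_mul] at h1
    refine h1.congr_of_eventuallyEq ?_
    filter_upwards [Ioi_mem_nhds ht] with y hy
    simp [gEll, show (0:ℝ) < y from hy]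

section Key

variable (ℓ : ℝ → ℝ)
    (hpos : ∀ r : ℝ, 0 < r → 0 < ℓ r)
    (hmono : ∀ s r : ℝ, 0 < s → s ≤ r → ℓ s ≤ ℓ r)
    (c : ℝ) (hc : 1 ≤ c)
    (halmost : ∀ s r : ℝ, 0 < s → s ≤ r → ℓ r / r ≤ c * (ℓ s / s))
    (hdiff1 : ∀ r : ℝ, 0 < r → DifferentiableAt ℝ ℓ r)
    (hdiff2 : ∀ r : ℝ, 0 < r → DifferentiableAt ℝ (deriv ℓ) r)
    (Creg : ℝ) (hCreg : 0 < Creg)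
    (hreg : ∀ r : ℝ, 0 < r → r * deriv ℓ r + |r ^ 2 * deriv (deriv ℓ) r| ≤ Creg * ℓ r)

include hpos hmono hdiff1 Creg hCreg hreg in
lemma gd_bounds {t : ℝ} (ht : 0 < t) : 0 ≤ gd ℓ t ∧ gd ℓ t ≤ (1 + Creg) * ℓ t := by
  rw [gd_of_pos ℓ ht]
  have hd := ell_deriv_nonneg ℓ hmono hdiff1 ht
  have h1 : t * deriv ℓ t ≤ Creg * ℓ t := by
    have := hreg t ht
    have := abs_nonneg (t ^ 2 * deriv (deriv ℓ) t)
    linarith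
  constructor
  · have := hpos t ht; positivity
  · linarith

include hpos hmono hc halmost hdiff1 hdiff2 hCreg hreg in
lemma key_est : ∀ a b : ℝ, a < b →
    |gd ℓ b - gd ℓ a| ≤ (4 * c * (1 + Creg) + 3 * c * Creg) * ℓ (b - a) := by
  intro a b hab
  set C := 4 * c * (1 + Creg) + 3 * c * Creg with hC
  have hba : 0 < b - a := by linarith
  have hlba : 0 < ℓ (b - a) := hpos _ hba
  have hC1 : 1 + Creg ≤ C := by nlinarith
  have h2c : 2 * c * (1 + Creg) ≤ C := by nlinarith
  have h3c : 3 * Creg * c ≤ C := by nlinarith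
  rcases le_or_gt b 0 with hb | hb
  · rw [show gd ℓ b = 0 from gd_of_nonpos ℓ (not_lt.mpr hb),
      show gd ℓ a = 0 from gd_of_nonpos ℓ (not_lt.mpr (by linarith))]
    simp only [sub_zero, abs_zero]
    positivity
  · rcases le_or_gt a 0 with ha | ha
    · -- a ≤ 0 < b
      rw [show gd ℓ a = 0 from gd_of_nonpos ℓ (not_lt.mpr ha)]
      obtain ⟨h0, h1⟩ := gd_bounds ℓ hpos hmono hdiff1 Creg hCreg hreg hb
      rw [sub_zero, abs_of_nonneg h0]
      calc gd ℓ b ≤ (1 + Creg) * ℓ b := h1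
        _ ≤ (1 + Creg) * ℓ (b - a) :=
            mul_le_mul_of_nonneg_left (hmono b (b - a) hb (by linarith)) (by linarith)
        _ ≤ C * ℓ (b - a) := mul_le_mul_of_nonneg_right hC1 hlba.le
    · -- 0 < a < b
      rcases le_or_gt a (b - a) with hcase | hcase
      · -- b ≥ 2a : crude bound
        obtain ⟨ha0, ha1⟩ := gd_bounds ℓ hpos hmono hdiff1 Creg hCreg hreg ha
        obtain ⟨hb0, hb1⟩ := gd_bounds ℓ hpos hmono hdiff1 Creg hCreg hreg hb
        have hlab : ℓ a ≤ ℓ b := hmono a b ha (le_of_lt hab)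
        have hbound : |gd ℓ b - gd ℓ a| ≤ (1 + Creg) * ℓ b := by
          rw [abs_sub_le_iff]
          constructor
          · linarith
          · have : gd ℓ a ≤ (1 + Creg) * ℓ b := le_trans ha1 (by nlinarith)
            linarith
        have hlb : ℓ b ≤ 2 * c * ℓ (b - a) := by
          have h := halmost (b - a) b hba (by linarith)
          have hb' : (0:ℝ) < b := hb
          have h2 : ℓ b ≤ c * (ℓ (b - a) / (b - a)) * b := by
            rw [div_le_iff₀ hb'] at h; linarith
          have h3 : b ≤ 2 * (b - a) := by linarith
          have h4 : 0 < c * (ℓ (b - a) / (b - a)) := by positivity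
          calc ℓ b ≤ c * (ℓ (b - a) / (b - a)) * b := h2
            _ ≤ c * (ℓ (b - a) / (b - a)) * (2 * (b - a)) := by nlinarith
            _ = 2 * c * ℓ (b - a) := by field_simp
        calc |gd ℓ b - gd ℓ a| ≤ (1 + Creg) * ℓ b := hbound
          _ ≤ (1 + Creg) * (2 * c * ℓ (b - a)) :=
              mul_le_mul_of_nonneg_left hlb (by linarith)
          _ = (2 * c * (1 + Creg)) * ℓ (b - a) := by ring
          _ ≤ C * ℓ (b - a) := mul_le_mul_of_nonneg_right h2c hlba.le
      · -- b - a < a : mean value estimate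
        set M := 3 * Creg * c * (ℓ (b - a) / (b - a)) with hM
        have hder : ∀ t ∈ Set.Icc a b,
            HasDerivWithinAt (gd ℓ)
              (deriv ℓ t + (1 * deriv ℓ t + t * deriv (deriv ℓ) t)) (Set.Icc a b) t := by
          intro t ht
          have ht0 : 0 < t := lt_of_lt_of_le ha ht.1
          have h1 : HasDerivAt (fun s : ℝ => ℓ s + s * deriv ℓ s)
              (deriv ℓ t + (1 * deriv ℓ t + t * deriv (deriv ℓ) t)) t :=
            HasDerivAt.add (hdiff1 t ht0).hasDerivAt
              ((hasDerivAt_id t).mul (hdiff2 t ht0).hasDerivAt)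
          have h2 : HasDerivAt (gd ℓ)
              (deriv ℓ t + (1 * deriv ℓ t + t * deriv (deriv ℓ) t)) t := by
            refine h1.congr_of_eventuallyEq ?_
            filter_upwards [Ioi_mem_nhds ht0] with y hy
            exact gd_of_pos ℓ hy
          exact h2.hasDerivWithinAt
        have hbound : ∀ t ∈ Set.Ico a b,
            ‖deriv ℓ t + (1 * deriv ℓ t + t * deriv (deriv ℓ) t)‖ ≤ M := by
          intro t ht
          have ht0 : 0 < t := lt_of_lt_of_le ha ht.1
          have hd := ell_deriv_nonneg ℓ hmono hdiff1 ht0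
          have hr := hreg t ht0
          have habs : |t ^ 2 * deriv (deriv ℓ) t| ≤ Creg * ℓ t := by
            nlinarith [mul_nonneg (le_of_lt ht0) hd]
          have h1 : t * deriv ℓ t ≤ Creg * ℓ t := by
            nlinarith [abs_nonneg (t ^ 2 * deriv (deriv ℓ) t)]
          have h2 : |t * deriv (deriv ℓ) t| ≤ Creg * ℓ t / t := by
            rw [le_div_iff₀ ht0]
            calc |t * deriv (deriv ℓ) t| * t = |t ^ 2 * deriv (deriv ℓ) t| := by
                  rw [abs_mul, abs_mul, abs_of_pos ht0, abs_of_pos (pow_pos ht0 2)]; ring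
              _ ≤ Creg * ℓ t := habs
          have h3 : deriv ℓ t ≤ Creg * ℓ t / t := by
            rw [le_div_iff₀ ht0]; nlinarith
          have h4 : ℓ t / t ≤ c * (ℓ (b - a) / (b - a)) :=
            halmost (b - a) t hba (by linarith [ht.1])
          have h5 : |deriv ℓ t + (1 * deriv ℓ t + t * deriv (deriv ℓ) t)|
              ≤ 3 * (Creg * ℓ t / t) := by
            rw [one_mul]
            calc |deriv ℓ t + (deriv ℓ t + t * deriv (deriv ℓ) t)|
                ≤ |deriv ℓ t| + |deriv ℓ t| + |t * deriv (deriv ℓ) t| := by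
                  have := abs_add_le (deriv ℓ t) (deriv ℓ t + t * deriv (deriv ℓ) t)
                  have := abs_add_le (deriv ℓ t) (t * deriv (deriv ℓ) t)
                  linarith
              _ ≤ Creg * ℓ t / t + (Creg * ℓ t / t) + (Creg * ℓ t / t) := by
                  rw [abs_of_nonneg hd]; linarith
              _ = 3 * (Creg * ℓ t / t) := by ring
          rw [Real.norm_eq_abs]
          calc |deriv ℓ t + (1 * deriv ℓ t + t * deriv (deriv ℓ) t)|
              ≤ 3 * (Creg * ℓ t / t) := h5
            _ ≤ M := by
                rw [hM]
                have : Creg * ℓ t / t = Creg * (ℓ t / t) := by ring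
                rw [this]
                have := mul_le_mul_of_nonneg_left h4 hCreg.le
                nlinarith
        have := norm_image_sub_le_of_norm_deriv_le_segment' hder hbound b
          (Set.right_mem_Icc.2 (le_of_lt hab))
        rw [Real.norm_eq_abs] at this
        calc |gd ℓ b - gd ℓ a| ≤ M * (b - a) := this
          _ = 3 * Creg * c * ℓ (b - a) := by rw [hM]; field_simp
          _ ≤ C * ℓ (b - a) := mul_le_mul_of_nonneg_right h3c hlba.le

end Key

lemma coord_abs_le_norm {m : ℕ} (x : EuclideanSpace ℝ (Fin m)) (i : Fin m) : |x i| ≤ ‖x‖ := by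
  rw [EuclideanSpace.norm_eq]
  have h1 : ‖x i‖ ^ 2 ≤ ∑ j, ‖x j‖ ^ 2 :=
    Finset.single_le_sum (fun j _ => sq_nonneg ‖x j‖) (Finset.mem_univ i)
  calc |x i| = Real.sqrt (‖x i‖ ^ 2) := by rw [Real.sqrt_sq_eq_abs, Real.norm_eq_abs, abs_abs]
    _ ≤ Real.sqrt (∑ j, ‖x j‖ ^ 2) := Real.sqrt_le_sqrt h1


theorem stmt_7 (d : ℕ) (hd : 2 ≤ d) (ℓ : ℝ → ℝ)
    (hpos : ∀ r : ℝ, 0 < r → 0 < ℓ r)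
    (hmono : ∀ s r : ℝ, 0 < s → s ≤ r → ℓ s ≤ ℓ r)
    (hlim : Filter.Tendsto ℓ (nhdsWithin 0 (Set.Ioi 0)) (nhds 0))
    (c : ℝ) (hc : 1 ≤ c)
    (halmost : ∀ s r : ℝ, 0 < s → s ≤ r → ℓ r / r ≤ c * (ℓ s / s))
    (hdiff1 : ∀ r : ℝ, 0 < r → DifferentiableAt ℝ ℓ r)
    (hdiff2 : ∀ r : ℝ, 0 < r → DifferentiableAt ℝ (deriv ℓ) r)
    (Creg : ℝ) (hCreg : 0 < Creg)
    (hreg : ∀ r : ℝ, 0 < r → r * deriv ℓ r + |r ^ 2 * deriv (deriv ℓ) r| ≤ Creg * ℓ r) :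
    Differentiable ℝ (GammaMap (d - 1) (by omega) ℓ) ∧
    (∀ x y : EuclideanSpace ℝ (Fin (d - 1)), x ⟨0, by omega⟩ = y ⟨0, by omega⟩ →
      fderiv ℝ (GammaMap (d - 1) (by omega) ℓ) x = fderiv ℝ (GammaMap (d - 1) (by omega) ℓ) y) ∧
    ∃ C : ℝ, 1 < C ∧
      ∀ x y : EuclideanSpace ℝ (Fin (d - 1)), x ⟨0, by omega⟩ ≠ y ⟨0, by omega⟩ →
        ‖fderiv ℝ (GammaMap (d - 1) (by omega) ℓ) x -
            fderiv ℝ (GammaMap (d - 1) (by omega) ℓ) y‖ ≤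
          C * ℓ |x ⟨0, by omega⟩ - y ⟨0, by omega⟩| ∧
        C * ℓ |x ⟨0, by omega⟩ - y ⟨0, by omega⟩| ≤ C * ℓ (dist x y) := by
  have h0 : 0 < d - 1 := by omega
  set C := 4 * c * (1 + Creg) + 3 * c * Creg with hCdef
  have hC1 : 1 < C := by nlinarith
  have hC0 : 0 ≤ C := by linarith
  set i : Fin (d - 1) := ⟨0, h0⟩ with hi
  set P := (EuclideanSpace.proj i : EuclideanSpace ℝ (Fin (d - 1)) →L[ℝ] ℝ) with hP
  have hPnorm : ‖P‖ ≤ 1 := by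
    refine ContinuousLinearMap.opNorm_le_bound _ zero_le_one fun y => ?_
    rw [one_mul]
    simpa [hP] using coord_abs_le_norm y i
  have hFD : ∀ x : EuclideanSpace ℝ (Fin (d - 1)),
      HasFDerivAt (GammaMap (d - 1) h0 ℓ) (gd ℓ (x i) • P) x := fun x =>
    (hasDerivAt_gEll ℓ hlim hdiff1 (x i)).comp_hasFDerivAt x P.hasFDerivAt
  have hfd : ∀ x : EuclideanSpace ℝ (Fin (d - 1)),
      fderiv ℝ (GammaMap (d - 1) h0 ℓ) x = gd ℓ (x i) • P := fun x => (hFD x).fderiv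
  have hkey := key_est ℓ hpos hmono c hc halmost hdiff1 hdiff2 Creg hCreg hreg
  have habs : ∀ a b : ℝ, a ≠ b → |gd ℓ a - gd ℓ b| ≤ C * ℓ |a - b| := by
    intro a b hne
    rcases lt_or_gt_of_ne hne with h | h
    · rw [abs_sub_comm, abs_of_neg (by linarith : a - b < 0)]
      simpa [neg_sub] using hkey a b h
    · rw [abs_of_pos (by linarith : 0 < a - b)]
      exact hkey b a h
  refine ⟨fun x => (hFD x).differentiableAt, fun x y hxy => by rw [hfd x, hfd y, hxy], C, hC1,
    fun x y hne => ?_⟩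
  have hco : |x i - y i| ≤ dist x y := by
    rw [dist_eq_norm]
    have : x i - y i = (x - y) i := rfl
    rw [this]
    exact coord_abs_le_norm (x - y) i
  have habspos : 0 < |x i - y i| := abs_pos.mpr (sub_ne_zero.mpr hne)
  constructor
  · rw [hfd x, hfd y, ← sub_smul, norm_smul, Real.norm_eq_abs]
    calc |gd ℓ (x i) - gd ℓ (y i)| * ‖P‖ ≤ |gd ℓ (x i) - gd ℓ (y i)| * 1 :=
        mul_le_mul_of_nonneg_left hPnorm (abs_nonneg _)
      _ = |gd ℓ (x i) - gd ℓ (y i)| := mul_one _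
      _ ≤ C * ℓ |x i - y i| := habs _ _ hne
  · exact mul_le_mul_of_nonneg_left (hmono _ _ habspos hco) hC0
end

section
/- Let α ∈ (0,2), θ ∈ (0, α/2), η := ((α−2θ) ∧ (2−α))/4, and let ℓ:(0,∞)→(0,∞) be nondecreasing. Let R ∈ (0,1] and λ > 0 satisfy λ·ℓ(R) < η, and let k > 0. Then for all 0 < s ≤ r: (r/s)^{α/2} ≤ Φ_{R,λ,k}(r)/Φ_{R,λ,k}(s) ≤ (r/s)^{α/2+η} and (r/s)^{α/2−η} ≤ Ψ_{R,λ,k}(r)/Ψ_{R,λ,k}(s) ≤ (r/s)^{α/2}. -/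
open MeasureTheory

/-- `Φ_{R,λ,k}(r) = (r/R)^{α/2} exp(-λ ∫_{kr}^R ℓ(u∧R)/u du)` for `r > 0`, and `0` for `r ≤ 0`. -/
noncomputable def Phi (α : ℝ) (ℓ : ℝ → ℝ) (R lam k r : ℝ) : ℝ :=
  if 0 < r then (r / R) ^ (α / 2) * Real.exp (-(lam * ∫ u in (k * r)..R, ℓ (min u R) / u)) else 0

/-- `Ψ_{R,λ,k}(r) = (r/R)^{α/2} exp(λ ∫_{kr}^R ℓ(u∧R)/u du)` for `r > 0`, and `0` for `r ≤ 0`. -/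
noncomputable def Psi (α : ℝ) (ℓ : ℝ → ℝ) (R lam k r : ℝ) : ℝ :=
  if 0 < r then (r / R) ^ (α / 2) * Real.exp (lam * ∫ u in (k * r)..R, ℓ (min u R) / u) else 0

lemma aux_int (ℓ : ℝ → ℝ) (hmono : ∀ s r : ℝ, 0 < s → s ≤ r → ℓ s ≤ ℓ r) (R : ℝ)
    (hR : 0 < R) {a b : ℝ} (ha : 0 < a) (hb : 0 < b) :
    IntervalIntegrable (fun u => ℓ (min u R) / u) MeasureTheory.volume a b := by
  have hsub : Set.uIcc a b ⊆ Set.Ioi 0 := by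
    intro x hx
    exact lt_of_lt_of_le (lt_min ha hb) (by simpa using hx.1)
  have hm : MonotoneOn (fun u => ℓ (min u R)) (Set.uIcc a b) := by
    intro x hx y hy hxy
    exact hmono _ _ (lt_min (hsub hx) hR) (min_le_min hxy le_rfl)
  have h1 : IntervalIntegrable (fun u => ℓ (min u R)) volume a b := hm.intervalIntegrable
  have h2 : ContinuousOn (fun u : ℝ => u⁻¹) (Set.uIcc a b) :=
    ContinuousOn.inv₀ continuousOn_id (fun x hx => ne_of_gt (hsub hx))
  simpa [div_eq_mul_inv] using h1.mul_continuousOn h2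

theorem stmt_9 (α θ : ℝ) (hα : α ∈ Set.Ioo (0 : ℝ) 2) (hθ : θ ∈ Set.Ioo (0 : ℝ) (α / 2))
    (ℓ : ℝ → ℝ) (hpos : ∀ r : ℝ, 0 < r → 0 < ℓ r)
    (hmono : ∀ s r : ℝ, 0 < s → s ≤ r → ℓ s ≤ ℓ r)
    (R lam k : ℝ) (hR : R ∈ Set.Ioc (0 : ℝ) 1) (hlam : 0 < lam)
    (hsmall : lam * ℓ R < min (α - 2 * θ) (2 - α) / 4) (hk : 0 < k) :
    ∀ s r : ℝ, 0 < s → s ≤ r →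
      ((r / s) ^ (α / 2) ≤ Phi α ℓ R lam k r / Phi α ℓ R lam k s ∧
        Phi α ℓ R lam k r / Phi α ℓ R lam k s ≤
          (r / s) ^ (α / 2 + min (α - 2 * θ) (2 - α) / 4)) ∧
      ((r / s) ^ (α / 2 - min (α - 2 * θ) (2 - α) / 4) ≤ Psi α ℓ R lam k r / Psi α ℓ R lam k s ∧
        Psi α ℓ R lam k r / Psi α ℓ R lam k s ≤ (r / s) ^ (α / 2)) := by
  intro s r hs hsr
  set η : ℝ := min (α - 2 * θ) (2 - α) / 4 with hη
  have hR0 : 0 < R := hR.1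
  have hr : 0 < r := lt_of_lt_of_le hs hsr
  have hks : 0 < k * s := mul_pos hk hs
  have hkr : 0 < k * r := mul_pos hk hr
  have hksr : k * s ≤ k * r := by nlinarith
  have hℓR : 0 < ℓ R := hpos R hR0
  have hηR : lam * ℓ R ≤ η := le_of_lt hsmall
  have hrs1 : (1 : ℝ) ≤ r / s := (one_le_div hs).mpr hsr
  have hrs0 : (0 : ℝ) < r / s := lt_of_lt_of_le one_pos hrs1
  have hlog0 : 0 ≤ Real.log (r / s) := Real.log_nonneg hrs1
  set I : ℝ := ∫ u in (k * s)..(k * r), ℓ (min u R) / u with hI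
  have hint1 := aux_int ℓ hmono R hR0 hks hkr
  have hint2 := aux_int ℓ hmono R hR0 hkr hR0
  have hint3 := aux_int ℓ hmono R hR0 hks hR0
  have hadd : (∫ u in (k * s)..R, ℓ (min u R) / u)
      = I + ∫ u in (k * r)..R, ℓ (min u R) / u :=
    (intervalIntegral.integral_add_adjacent_intervals hint1 hint2).symm
  have hI0 : 0 ≤ I := by
    apply intervalIntegral.integral_nonneg hksr
    intro x hx
    have hx0 : 0 < x := lt_of_lt_of_le hks hx.1
    exact div_nonneg (le_of_lt (hpos _ (lt_min hx0 hR0))) (le_of_lt hx0)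
  have hIle : I ≤ ℓ R * Real.log (r / s) := by
    have hb : I ≤ ∫ u in (k * s)..(k * r), ℓ R / u := by
      apply intervalIntegral.integral_mono_on hksr hint1
      · apply ContinuousOn.intervalIntegrable
        apply ContinuousOn.div continuousOn_const continuousOn_id
        intro x hx
        exact ne_of_gt (lt_of_lt_of_le (lt_min hks hkr) (by simpa using hx.1))
      · intro x hx
        have hx0 : 0 < x := lt_of_lt_of_le hks hx.1
        have h := hmono _ _ (lt_min hx0 hR0) (min_le_right x R)
        exact div_le_div_of_nonneg_right h hx0.le
    have hc : (∫ u in (k * s)..(k * r), ℓ R / u) = ℓ R * Real.log (r / s) := by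
      have h0 : (0 : ℝ) ∉ Set.uIcc (k * s) (k * r) := by
        intro hmem
        exact absurd (lt_of_lt_of_le (lt_min hks hkr) (by simpa using hmem.1)) (lt_irrefl 0)
      have : (∫ u in (k * s)..(k * r), ℓ R / u)
          = ℓ R * ∫ u in (k * s)..(k * r), 1 / u := by
        rw [← intervalIntegral.integral_const_mul]
        congr 1; funext u; ring
      rw [this, integral_one_div h0,
        show (k * r) / (k * s) = r / s by field_simp]
    linarith [hb, hc.le, hc.ge]
  -- ratio identities
  have hPhi : Phi α ℓ R lam k r / Phi α ℓ R lam k s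
      = (r / s) ^ (α / 2) * Real.exp (lam * I) := by
    rw [Phi, Phi, if_pos hr, if_pos hs, mul_div_mul_comm]
    congr 1
    · rw [← Real.div_rpow (by positivity) (by positivity),
        show (r / R) / (s / R) = r / s by field_simp]
    · rw [← Real.exp_sub]
      congr 1
      rw [hadd]; ring
  have hPsi : Psi α ℓ R lam k r / Psi α ℓ R lam k s
      = (r / s) ^ (α / 2) * Real.exp (-(lam * I)) := by
    rw [Psi, Psi, if_pos hr, if_pos hs, mul_div_mul_comm]
    congr 1
    · rw [← Real.div_rpow (by positivity) (by positivity),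
        show (r / R) / (s / R) = r / s by field_simp]
    · rw [← Real.exp_sub]
      congr 1
      rw [hadd]; ring
  have hexpub : Real.exp (lam * I) ≤ (r / s) ^ η := by
    rw [Real.rpow_def_of_pos hrs0]
    apply Real.exp_le_exp.mpr
    calc lam * I ≤ lam * (ℓ R * Real.log (r / s)) := by
          exact mul_le_mul_of_nonneg_left hIle (le_of_lt hlam)
      _ = (lam * ℓ R) * Real.log (r / s) := by ring
      _ ≤ η * Real.log (r / s) := mul_le_mul_of_nonneg_right hηR hlog0
      _ = Real.log (r / s) * η := by ring
  have hexplb : (r / s) ^ (-η) ≤ Real.exp (-(lam * I)) := by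
    rw [Real.rpow_def_of_pos hrs0]
    apply Real.exp_le_exp.mpr
    have : lam * I ≤ η * Real.log (r / s) := by
      calc lam * I ≤ lam * (ℓ R * Real.log (r / s)) :=
            mul_le_mul_of_nonneg_left hIle (le_of_lt hlam)
        _ = (lam * ℓ R) * Real.log (r / s) := by ring
        _ ≤ η * Real.log (r / s) := mul_le_mul_of_nonneg_right hηR hlog0
    nlinarith
  have hp0 : (0 : ℝ) ≤ (r / s) ^ (α / 2) := Real.rpow_nonneg (le_of_lt hrs0) _
  refine ⟨⟨?_, ?_⟩, ?_, ?_⟩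
  · rw [hPhi]
    exact le_mul_of_one_le_right hp0 (Real.one_le_exp (by positivity))
  · rw [hPhi, Real.rpow_add hrs0]
    exact mul_le_mul_of_nonneg_left hexpub hp0
  · rw [hPsi, Real.rpow_sub hrs0, div_eq_mul_inv, ← Real.rpow_neg (le_of_lt hrs0)]
    exact mul_le_mul_of_nonneg_left hexplb hp0
  · rw [hPsi]
    exact mul_le_of_le_one_right hp0 (Real.exp_le_one_iff.mpr (by nlinarith))
end

section
/- Let α ∈ (0,2), θ ∈ (0, α/2), η := ((α−2θ) ∧ (2−α))/4, and let ℓ:(0,∞)→(0,∞) be nondecreasing. Let R ∈ (0,1] and λ > 0 satisfy λ·ℓ(R) < η, and let k > 0. Then for all 0 < s ≤ r: Φ_{R,λ,k}(r) − Φ_{R,λ,k}(s) ≤ 2·Φ_{R,λ,k}(r)·(r−s)/r and Ψ_{R,λ,k}(r) − Ψ_{R,λ,k}(s) ≤ 2·Ψ_{R,λ,k}(r)·(r−s)/r. -/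
open MeasureTheory

theorem stmt_11 (α θ : ℝ) (hα : α ∈ Set.Ioo (0 : ℝ) 2) (hθ : θ ∈ Set.Ioo (0 : ℝ) (α / 2))
    (ℓ : ℝ → ℝ) (hpos : ∀ r : ℝ, 0 < r → 0 < ℓ r)
    (hmono : ∀ s r : ℝ, 0 < s → s ≤ r → ℓ s ≤ ℓ r)
    (R lam k : ℝ) (hR : R ∈ Set.Ioc (0 : ℝ) 1) (hlam : 0 < lam)
    (hsmall : lam * ℓ R < min (α - 2 * θ) (2 - α) / 4) (hk : 0 < k) :
    ∀ s r : ℝ, 0 < s → s ≤ r →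
      Phi α ℓ R lam k r - Phi α ℓ R lam k s ≤ 2 * Phi α ℓ R lam k r * (r - s) / r ∧
      Psi α ℓ R lam k r - Psi α ℓ R lam k s ≤ 2 * Psi α ℓ R lam k r * (r - s) / r := by
  obtain ⟨hα0, hα2⟩ := hα
  obtain ⟨hR0, hR1⟩ := hR
  intro s r hs hsr
  have hr : 0 < r := lt_of_lt_of_le hs hsr
  set f : ℝ → ℝ := fun u => ℓ (min u R) / u with hf
  -- interval integrability
  have hInt : ∀ a b : ℝ, 0 < a → 0 < b → IntervalIntegrable f volume a b := by
    intro a b ha hb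
    have hmem : ∀ x ∈ Set.uIcc a b, 0 < x := by
      intro x hx
      rcases le_total a b with h | h
      · rw [Set.uIcc_of_le h] at hx; exact lt_of_lt_of_le ha hx.1
      · rw [Set.uIcc_of_ge h] at hx; exact lt_of_lt_of_le hb hx.1
    have hg : MonotoneOn (fun u => ℓ (min u R)) (Set.uIcc a b) := by
      intro x hx y hy hxy
      exact hmono _ _ (lt_min (hmem x hx) hR0) (min_le_min hxy le_rfl)
    have h1 : IntervalIntegrable (fun u => ℓ (min u R)) volume a b :=
      hg.intervalIntegrable
    have h2 : ContinuousOn (fun u : ℝ => 1 / u) (Set.uIcc a b) :=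
      ContinuousOn.div continuousOn_const continuousOn_id (fun x hx => (hmem x hx).ne')
    have h3 := h1.mul_continuousOn h2
    simpa [hf, div_eq_mul_inv, one_div] using h3
  have hks : 0 < k * s := by positivity
  have hkr : 0 < k * r := by positivity
  have hksr : k * s ≤ k * r := mul_le_mul_of_nonneg_left hsr hk.le
  set A : ℝ := ∫ u in (k * s)..(k * r), f u with hA
  set Ir : ℝ := ∫ u in (k * r)..R, f u with hIr
  have hsplit : (∫ u in (k * s)..R, f u) = A + Ir :=
    (intervalIntegral.integral_add_adjacent_intervals (hInt _ _ hks hkr)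
      (hInt _ _ hkr hR0)).symm
  have hA0 : 0 ≤ A := by
    apply intervalIntegral.integral_nonneg hksr
    intro u hu
    have hu0 : 0 < u := lt_of_lt_of_le hks hu.1
    have := hpos _ (lt_min hu0 hR0)
    positivity
  -- bound on A
  have hlogrs : Real.log ((k * r) / (k * s)) = Real.log (r / s) := by
    congr 1
    field_simp
  have hAle : A ≤ ℓ R * Real.log (r / s) := by
    have hmono' : ∀ u ∈ Set.Icc (k * s) (k * r), f u ≤ ℓ R / u := by
      intro u hu
      have hu0 : 0 < u := lt_of_lt_of_le hks hu.1
      have hle : ℓ (min u R) ≤ ℓ R := hmono _ _ (lt_min hu0 hR0) (min_le_right _ _)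
      show ℓ (min u R) / u ≤ ℓ R / u
      gcongr
    have hint2 : IntervalIntegrable (fun u : ℝ => ℓ R / u) volume (k * s) (k * r) := by
      apply ContinuousOn.intervalIntegrable
      apply ContinuousOn.div continuousOn_const continuousOn_id
      intro x hx
      have : 0 < x := by
        rw [Set.uIcc_of_le hksr] at hx
        exact lt_of_lt_of_le hks hx.1
      exact this.ne'
    have h1 : A ≤ ∫ u in (k * s)..(k * r), ℓ R / u :=
      intervalIntegral.integral_mono_on hksr (hInt _ _ hks hkr) hint2 hmono'
    have h2 : (∫ u in (k * s)..(k * r), ℓ R / u) = ℓ R * Real.log (r / s) := by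
      have h0 : (0 : ℝ) ∉ Set.uIcc (k * s) (k * r) := by
        rw [Set.uIcc_of_le hksr]
        intro h
        exact absurd h.1 (not_le.2 hks)
      simp_rw [div_eq_mul_inv, ← one_div]
      rw [intervalIntegral.integral_const_mul, integral_one_div h0, hlogrs, mul_one_div]
    linarith [h1, h2.le, h2.ge]
  set t : ℝ := s / r with ht
  have ht0 : 0 < t := by positivity
  have ht1 : t ≤ 1 := (div_le_one hr).2 hsr
  have hst : s = t * r := (div_mul_cancel₀ s hr.ne').symm
  have hlogt : Real.log (r / s) = -Real.log t := by
    rw [ht, Real.log_div hr.ne' hs.ne', Real.log_div hs.ne' hr.ne']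
    ring
  have hβ : α / 2 + lam * ℓ R ≤ 1 := by
    have hm : min (α - 2 * θ) (2 - α) ≤ 2 - α := min_le_right _ _
    linarith
  have hsR : (s / R) ^ (α / 2) = (r / R) ^ (α / 2) * t ^ (α / 2) := by
    rw [← Real.mul_rpow (by positivity) ht0.le]
    congr 1
    rw [ht, div_mul_div_comm, mul_comm R r, mul_div_mul_left s R hr.ne']
  -- exp bounds
  have hexpA : t ^ (lam * ℓ R) ≤ Real.exp (-(lam * A)) := by
    rw [Real.rpow_def_of_pos ht0]
    apply Real.exp_le_exp.2
    have h := mul_le_mul_of_nonneg_left hAle hlam.le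
    rw [hlogt] at h
    nlinarith [h]
  have e2 : t ≤ t ^ (α / 2 + lam * ℓ R) := by
    have := Real.rpow_le_rpow_of_exponent_ge ht0 ht1 hβ
    simpa using this
  have e3 : t ≤ t ^ (α / 2) * Real.exp (-(lam * A)) := by
    calc t ≤ t ^ (α / 2 + lam * ℓ R) := e2
    _ = t ^ (α / 2) * t ^ (lam * ℓ R) := Real.rpow_add ht0 _ _
    _ ≤ t ^ (α / 2) * Real.exp (-(lam * A)) :=
        mul_le_mul_of_nonneg_left hexpA (Real.rpow_nonneg ht0.le _)
  have e4 : t ≤ t ^ (α / 2) * Real.exp (lam * A) := by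
    have h1 : t ≤ t ^ (α / 2) := by
      have := Real.rpow_le_rpow_of_exponent_ge ht0 ht1 (by linarith : α / 2 ≤ 1)
      simpa using this
    have h2 : (1 : ℝ) ≤ Real.exp (lam * A) := Real.one_le_exp (by positivity)
    nlinarith [Real.rpow_nonneg ht0.le (α / 2)]
  -- key inequalities
  have keyPhi : Phi α ℓ R lam k r * s ≤ Phi α ℓ R lam k s * r := by
    simp only [Phi, if_pos hr, if_pos hs]
    rw [hsR, hsplit]
    have hdecomp : Real.exp (-(lam * (A + Ir))) =
        Real.exp (-(lam * A)) * Real.exp (-(lam * Ir)) := by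
      rw [← Real.exp_add]; ring_nf
    rw [hdecomp]
    set C : ℝ := (r / R) ^ (α / 2) * Real.exp (-(lam * Ir)) with hC
    have hC0 : 0 ≤ C := by positivity
    have h4 : C * t * r ≤ C * (t ^ (α / 2) * Real.exp (-(lam * A))) * r :=
      mul_le_mul_of_nonneg_right (mul_le_mul_of_nonneg_left e3 hC0) hr.le
    calc (r / R) ^ (α / 2) * Real.exp (-(lam * Ir)) * s = C * t * r := by
          rw [hst]; ring
      _ ≤ C * (t ^ (α / 2) * Real.exp (-(lam * A))) * r := h4
      _ = (r / R) ^ (α / 2) * t ^ (α / 2) *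
          (Real.exp (-(lam * A)) * Real.exp (-(lam * Ir))) * r := by rw [hC]; ring
  have keyPsi : Psi α ℓ R lam k r * s ≤ Psi α ℓ R lam k s * r := by
    simp only [Psi, if_pos hr, if_pos hs]
    rw [hsR, hsplit]
    have hdecomp : Real.exp (lam * (A + Ir)) =
        Real.exp (lam * A) * Real.exp (lam * Ir) := by
      rw [← Real.exp_add]; ring_nf
    rw [hdecomp]
    set C : ℝ := (r / R) ^ (α / 2) * Real.exp (lam * Ir) with hC
    have hC0 : 0 ≤ C := by positivity
    have h4 : C * t * r ≤ C * (t ^ (α / 2) * Real.exp (lam * A)) * r :=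
      mul_le_mul_of_nonneg_right (mul_le_mul_of_nonneg_left e4 hC0) hr.le
    calc (r / R) ^ (α / 2) * Real.exp (lam * Ir) * s = C * t * r := by
          rw [hst]; ring
      _ ≤ C * (t ^ (α / 2) * Real.exp (lam * A)) * r := h4
      _ = (r / R) ^ (α / 2) * t ^ (α / 2) *
          (Real.exp (lam * A) * Real.exp (lam * Ir)) * r := by rw [hC]; ring
  have hPhi0 : 0 ≤ Phi α ℓ R lam k r := by
    simp only [Phi, if_pos hr]; positivity
  have hPsi0 : 0 ≤ Psi α ℓ R lam k r := by
    simp only [Psi, if_pos hr]; positivity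
  constructor
  · rw [div_eq_mul_inv, ← div_eq_mul_inv, le_div_iff₀ hr]
    have h5 : Phi α ℓ R lam k r * s ≤ Phi α ℓ R lam k r * r :=
      mul_le_mul_of_nonneg_left hsr hPhi0
    linarith [keyPhi, h5]
  · rw [div_eq_mul_inv, ← div_eq_mul_inv, le_div_iff₀ hr]
    have h5 : Psi α ℓ R lam k r * s ≤ Psi α ℓ R lam k r * r :=
      mul_le_mul_of_nonneg_left hsr hPsi0
    linarith [keyPsi, h5]
end

section
/- Let α ∈ (0,2), θ ∈ (0, α/2), η := ((α−2θ) ∧ (2−α))/4, and let ℓ:(0,∞)→(0,∞) be nondecreasing, twice differentiable on (0,∞), and satisfy r·ℓ'(r) + |r²·ℓ''(r)| ≤ C₀·ℓ(r) for all r > 0, for some C₀ > 0. Let R ∈ (0,1] and λ > 0 satisfy λ·ℓ(R) < η, and let k > 0. Then Φ_{R,λ,k} and Ψ_{R,λ,k} are three times differentiable on (0, R/k) and there exists a constant C > 0, depending only on α and C₀, such that for all r ∈ (0, R/k): |r·Φ_{R,λ,k}'(r)| + |r²·Φ_{R,λ,k}''(r)| + |r³·Φ_{R,λ,k}'''(r)|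 ≤ C·Φ_{R,λ,k}(r) and |r·Ψ_{R,λ,k}'(r)| + |r²·Ψ_{R,λ,k}''(r)| + |r³·Ψ_{R,λ,k}'''(r)| ≤ C·Ψ_{R,λ,k}(r). -/
open MeasureTheory

set_option maxHeartbeats 1000000

lemma deriv_nonneg_of_mono {ℓ : ℝ → ℝ} {x d : ℝ} (hx : 0 < x)
    (hmono : ∀ s r : ℝ, 0 < s → s ≤ r → ℓ s ≤ ℓ r) (hd : HasDerivAt ℓ d x) : 0 ≤ d := by
  have h1 : HasDerivWithinAt ℓ d (Set.Ioi x) x := hd.hasDerivWithinAt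
  rw [hasDerivWithinAt_iff_tendsto_slope] at h1
  have hset : Set.Ioi x \ {x} = Set.Ioi x := by
    ext y
    constructor
    · exact fun h => h.1
    · exact fun h => ⟨h, fun h' => lt_irrefl x (by simp_all)⟩
  rw [hset] at h1
  refine ge_of_tendsto h1 ?_
  filter_upwards [self_mem_nhdsWithin] with y hy
  have hy' : x < y := hy
  have h2 : ℓ x ≤ ℓ y := hmono x y hx hy'.le
  rw [slope_def_field]
  have : 0 ≤ ℓ y - ℓ x := by linarith
  exact div_nonneg this (by linarith)

lemma phi_master (α C₀ : ℝ) (hα : α ∈ Set.Ioo (0:ℝ) 2) (hC₀ : 0 < C₀)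
    (ℓ : ℝ → ℝ)
    (hpos : ∀ r : ℝ, 0 < r → 0 < ℓ r)
    (hmono : ∀ s r : ℝ, 0 < s → s ≤ r → ℓ s ≤ ℓ r)
    (hd1 : ∀ r : ℝ, 0 < r → DifferentiableAt ℝ ℓ r)
    (hd2 : ∀ r : ℝ, 0 < r → DifferentiableAt ℝ (deriv ℓ) r)
    (hineq : ∀ r : ℝ, 0 < r → r * deriv ℓ r + |r ^ 2 * deriv (deriv ℓ) r| ≤ C₀ * ℓ r)
    (R lam k : ℝ) (hR : R ∈ Set.Ioc (0:ℝ) 1) (hlam : |lam| * ℓ R < 1/2) (hk : 0 < k)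
    (r : ℝ) (hr : r ∈ Set.Ioo 0 (R/k)) :
    (DifferentiableAt ℝ (Phi α ℓ R lam k) r ∧ DifferentiableAt ℝ (deriv (Phi α ℓ R lam k)) r ∧
      DifferentiableAt ℝ (deriv (deriv (Phi α ℓ R lam k))) r) ∧
    |r * deriv (Phi α ℓ R lam k) r| + |r ^ 2 * deriv (deriv (Phi α ℓ R lam k)) r| +
      |r ^ 3 * deriv (deriv (deriv (Phi α ℓ R lam k))) r| ≤
        (100 + 100 * C₀) * Phi α ℓ R lam k r := by
  obtain ⟨hR0, hR1⟩ := hR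
  obtain ⟨hα0, hα2⟩ := hα
  set S : Set ℝ := Set.Ioo (0:ℝ) (R/k) with hS
  have hSopen : IsOpen S := isOpen_Ioo
  -- basic facts about points of S
  have hmemS : ∀ x ∈ S, 0 < x ∧ 0 < k * x ∧ k * x < R := by
    rintro x ⟨hx0, hxR⟩
    refine ⟨hx0, by positivity, ?_⟩
    rw [lt_div_iff₀ hk] at hxR
    linarith [hxR]
  -- integrand
  set f : ℝ → ℝ := fun u => ℓ (min u R) / u with hf
  have hfc : ∀ u : ℝ, 0 < u → ContinuousAt f u := by
    intro u hu
    have h1 : ContinuousAt (fun u : ℝ => ℓ (min u R)) u := by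
      have hm : 0 < min u R := lt_min hu hR0
      exact ContinuousAt.comp (hd1 _ hm).continuousAt
        (Continuous.continuousAt (continuous_id.min continuous_const))
    exact h1.div continuousAt_id (ne_of_gt hu)
  have hfcOn : ContinuousOn f (Set.Ioi 0) := fun u hu => (hfc u hu).continuousWithinAt
  -- derivative of the integral
  have hInt : ∀ x ∈ S, HasDerivAt (fun y => ∫ u in (k * y)..R, f u) (-(ℓ (k * x) / x)) x := by
    intro x hx
    obtain ⟨hx0, hkx0, hkxR⟩ := hmemS x hx
    have hII : IntervalIntegrable f volume R (k * x) := by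
      apply ContinuousOn.intervalIntegrable
      apply hfcOn.mono
      intro u hu
      have h1 : min R (k * x) ≤ u := by
        rw [Set.uIcc_eq_union] at hu
        rcases hu with hu | hu
        · exact le_trans (min_le_left _ _) hu.1
        · exact le_trans (min_le_right _ _) hu.1
      have : 0 < min R (k * x) := lt_min hR0 hkx0
      exact lt_of_lt_of_le this h1
    have hmeas : StronglyMeasurableAtFilter f (nhds (k * x)) volume :=
      ContinuousOn.stronglyMeasurableAtFilter isOpen_Ioi hfcOn (k * x) hkx0
    have h1 : HasDerivAt (fun z => ∫ u in R..z, f u) (f (k * x)) (k * x) :=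
      intervalIntegral.integral_hasDerivAt_right hII hmeas (hfc _ hkx0)
    have hky : HasDerivAt (fun y : ℝ => k * y) k x := by
      simpa using (hasDerivAt_id x).const_mul k
    have h2 : HasDerivAt (fun y => ∫ u in R..(k * y), f u) (f (k * x) * k) x :=
      HasDerivAt.comp x h1 hky
    have h3 : (fun y => ∫ u in (k * y)..R, f u) = (fun y => -∫ u in R..(k * y), f u) := by
      funext y; rw [intervalIntegral.integral_symm]
    rw [h3]
    refine h2.neg.congr_deriv ?_
    have hmin : min (k * x) R = k * x := min_eq_left hkxR.le
    rw [hf]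
    simp only [hmin]
    field_simp
  -- auxiliary functions
  set A : ℝ → ℝ := fun x => α / 2 + lam * ℓ (k * x) with hA
  set A' : ℝ → ℝ := fun x => lam * (deriv ℓ (k * x) * k) with hA'
  set A'' : ℝ → ℝ := fun x => lam * (deriv (deriv ℓ) (k * x) * k * k) with hA''
  set B : ℝ → ℝ := fun x => A x ^ 2 + x * A' x - A x with hB
  set B' : ℝ → ℝ := fun x => 2 * A x * A' x + x * A'' x with hB'
  set D : ℝ → ℝ := fun x => A x * B x + x * B' x - 2 * B x with hD
  have hky : ∀ x : ℝ, HasDerivAt (fun y : ℝ => k * y) k x := by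
    intro x; simpa using (hasDerivAt_id x).const_mul k
  have hAd : ∀ x ∈ S, HasDerivAt A (A' x) x := by
    intro x hx
    obtain ⟨hx0, hkx0, hkxR⟩ := hmemS x hx
    have h1 : HasDerivAt (fun y => ℓ (k * y)) (deriv ℓ (k * x) * k) x :=
      HasDerivAt.comp x ((hd1 _ hkx0).hasDerivAt) (hky x)
    exact (h1.const_mul lam).const_add (α / 2)
  have hA'd : ∀ x ∈ S, HasDerivAt A' (A'' x) x := by
    intro x hx
    obtain ⟨hx0, hkx0, hkxR⟩ := hmemS x hx
    have h1 : HasDerivAt (fun y => deriv ℓ (k * y)) (deriv (deriv ℓ) (k * x) * k) x :=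
      HasDerivAt.comp x ((hd2 _ hkx0).hasDerivAt) (hky x)
    have h2 := (h1.mul_const k).const_mul lam
    convert h2 using 1
  have hBd : ∀ x ∈ S, HasDerivAt B (B' x) x := by
    intro x hx
    have h1 := ((hAd x hx).pow 2).add ((hasDerivAt_id x).mul (hA'd x hx))
    have h2 := h1.sub (hAd x hx)
    refine h2.congr_deriv ?_
    simp [hB']
    ring
  -- first derivative of Phi
  have hPhi1 : ∀ x ∈ S, HasDerivAt (Phi α ℓ R lam k) (Phi α ℓ R lam k x * A x / x) x := by
    intro x hx
    obtain ⟨hx0, hkx0, hkxR⟩ := hmemS x hx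
    have hxR : 0 < x / R := by positivity
    -- the rpow part
    have hP : HasDerivAt (fun y : ℝ => (y / R) ^ (α / 2))
        ((α / 2) * (x / R) ^ (α / 2 - 1) * (1 / R)) x := by
      have h1 : HasDerivAt (fun z : ℝ => z ^ (α / 2))
          ((α / 2) * (x / R) ^ (α / 2 - 1)) (x / R) :=
        (Real.hasStrictDerivAt_rpow_const (Or.inl (ne_of_gt hxR))).hasDerivAt
      have h2 : HasDerivAt (fun y : ℝ => y / R) (1 / R) x := by
        simpa using (hasDerivAt_id x).div_const R
      exact HasDerivAt.comp x h1 h2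
    -- the exp part
    have hQ : HasDerivAt (fun y => Real.exp (-(lam * ∫ u in (k * y)..R, f u)))
        (Real.exp (-(lam * ∫ u in (k * x)..R, f u)) * (lam * ℓ (k * x) / x)) x := by
      have h1 := (((hInt x hx).const_mul lam).neg).exp
      refine h1.congr_deriv ?_
      simp only [Pi.neg_apply]
      ring
    have hE : HasDerivAt (fun y => (y / R) ^ (α / 2) *
        Real.exp (-(lam * ∫ u in (k * y)..R, f u)))
        (Phi α ℓ R lam k x * A x / x) x := by
      have h1 := hP.mul hQ
      refine h1.congr_deriv ?_
      have hPx : Phi α ℓ R lam k x = (x / R) ^ (α / 2) *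
          Real.exp (-(lam * ∫ u in (k * x)..R, f u)) := by
        rw [Phi, if_pos hx0]
      rw [hPx, hA]
      have hpow : (x / R) ^ (α / 2 - 1) = (x / R) ^ (α / 2) / (x / R) := by
        rw [Real.rpow_sub hxR, Real.rpow_one]
      rw [hpow]
      field_simp
    refine hE.congr_of_eventuallyEq ?_
    filter_upwards [hSopen.mem_nhds hx] with y hy
    rw [Phi, if_pos (hmemS y hy).1]
  have hderiv1 : ∀ x ∈ S, deriv (Phi α ℓ R lam k) x = Phi α ℓ R lam k x * A x / x :=
    fun x hx => (hPhi1 x hx).deriv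
  -- second derivative
  have hPhi2 : ∀ x ∈ S, HasDerivAt (deriv (Phi α ℓ R lam k))
      (Phi α ℓ R lam k x * B x / x ^ 2) x := by
    intro x hx
    obtain ⟨hx0, hkx0, hkxR⟩ := hmemS x hx
    have hQ1 : HasDerivAt (fun y => Phi α ℓ R lam k y * A y / y)
        (Phi α ℓ R lam k x * B x / x ^ 2) x := by
      have h1 := ((hPhi1 x hx).mul (hAd x hx)).div (hasDerivAt_id x) (ne_of_gt hx0)
      refine h1.congr_deriv ?_
      rw [hB]
      simp only [id, Pi.mul_apply]
      field_simp
    refine hQ1.congr_of_eventuallyEq ?_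
    filter_upwards [hSopen.mem_nhds hx] with y hy
    exact hderiv1 y hy
  have hderiv2 : ∀ x ∈ S, deriv (deriv (Phi α ℓ R lam k)) x =
      Phi α ℓ R lam k x * B x / x ^ 2 := fun x hx => (hPhi2 x hx).deriv
  -- third derivative
  have hPhi3 : ∀ x ∈ S, HasDerivAt (deriv (deriv (Phi α ℓ R lam k)))
      (Phi α ℓ R lam k x * D x / x ^ 3) x := by
    intro x hx
    obtain ⟨hx0, hkx0, hkxR⟩ := hmemS x hx
    have hsq : HasDerivAt (fun y : ℝ => y ^ 2) (2 * x) x := by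
      simpa using hasDerivAt_pow 2 x
    have hQ2 : HasDerivAt (fun y => Phi α ℓ R lam k y * B y / y ^ 2)
        (Phi α ℓ R lam k x * D x / x ^ 3) x := by
      have h1 := ((hPhi1 x hx).mul (hBd x hx)).div hsq (by positivity : (x:ℝ) ^ 2 ≠ 0)
      refine h1.congr_deriv ?_
      rw [hD]
      simp only [Pi.mul_apply]
      field_simp
    refine hQ2.congr_of_eventuallyEq ?_
    filter_upwards [hSopen.mem_nhds hx] with y hy
    exact hderiv2 y hy
  have hderiv3 : deriv (deriv (deriv (Phi α ℓ R lam k))) r =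
      Phi α ℓ R lam k r * D r / r ^ 3 := (hPhi3 r hr).deriv
  -- bounds at the point r
  obtain ⟨hr0, hkr0, hkrR⟩ := hmemS r hr
  have hl0 : 0 < ℓ (k * r) := hpos _ hkr0
  have hlR : ℓ (k * r) ≤ ℓ R := hmono _ _ hkr0 hkrR.le
  have hM : |lam| * ℓ (k * r) ≤ 1 / 2 := by
    have : |lam| * ℓ (k * r) ≤ |lam| * ℓ R := by
      apply mul_le_mul_of_nonneg_left hlR (abs_nonneg lam)
    linarith
  have hL'0 : 0 ≤ deriv ℓ (k * r) := deriv_nonneg_of_mono hkr0 hmono (hd1 _ hkr0).hasDerivAt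
  have hkey := hineq (k * r) hkr0
  have habs2 : |(k * r) ^ 2 * deriv (deriv ℓ) (k * r)| ≤ C₀ * ℓ (k * r) := by
    have : 0 ≤ (k * r) * deriv ℓ (k * r) := by positivity
    linarith
  have habs1 : (k * r) * deriv ℓ (k * r) ≤ C₀ * ℓ (k * r) := by
    have := abs_nonneg ((k * r) ^ 2 * deriv (deriv ℓ) (k * r))
    linarith
  have aA : |A r| ≤ 3 / 2 := by
    rw [hA]
    have h1 : |lam * ℓ (k * r)| = |lam| * ℓ (k * r) := by
      rw [abs_mul, abs_of_pos hl0]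
    calc |α / 2 + lam * ℓ (k * r)| ≤ |α / 2| + |lam * ℓ (k * r)| := abs_add_le _ _
      _ ≤ 1 + 1 / 2 := by
          rw [h1, abs_of_pos (by linarith : (0:ℝ) < α / 2)]
          linarith [hM]
      _ = 3 / 2 := by norm_num
  have aRA' : |r * A' r| ≤ C₀ / 2 := by
    have he : r * A' r = lam * ((k * r) * deriv ℓ (k * r)) := by rw [hA']; ring
    rw [he, abs_mul]
    have h2 : |(k * r) * deriv ℓ (k * r)| = (k * r) * deriv ℓ (k * r) :=
      abs_of_nonneg (by positivity)
    calc |lam| * |(k * r) * deriv ℓ (k * r)| ≤ |lam| * (C₀ * ℓ (k * r)) := by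
          apply mul_le_mul_of_nonneg_left _ (abs_nonneg lam)
          rw [h2]; exact habs1
      _ = C₀ * (|lam| * ℓ (k * r)) := by ring
      _ ≤ C₀ * (1 / 2) := by apply mul_le_mul_of_nonneg_left hM hC₀.le
      _ = C₀ / 2 := by ring
  have aR2A'' : |r ^ 2 * A'' r| ≤ C₀ / 2 := by
    have he : r ^ 2 * A'' r = lam * ((k * r) ^ 2 * deriv (deriv ℓ) (k * r)) := by
      rw [hA'']; ring
    rw [he, abs_mul]
    calc |lam| * |(k * r) ^ 2 * deriv (deriv ℓ) (k * r)| ≤ |lam| * (C₀ * ℓ (k * r)) :=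
          mul_le_mul_of_nonneg_left habs2 (abs_nonneg lam)
      _ = C₀ * (|lam| * ℓ (k * r)) := by ring
      _ ≤ C₀ * (1 / 2) := mul_le_mul_of_nonneg_left hM hC₀.le
      _ = C₀ / 2 := by ring
  have aB : |B r| ≤ 9 / 4 + C₀ / 2 + 3 / 2 := by
    rw [hB]
    calc |A r ^ 2 + r * A' r - A r| ≤ |A r ^ 2| + |r * A' r| + |A r| := by
          have := abs_sub (A r ^ 2 + r * A' r) (A r)
          have := abs_add_le (A r ^ 2) (r * A' r)
          calc |A r ^ 2 + r * A' r - A r| ≤ |A r ^ 2 + r * A' r| + |A r| := abs_sub _ _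
            _ ≤ |A r ^ 2| + |r * A' r| + |A r| := by linarith [abs_add_le (A r ^ 2) (r * A' r)]
      _ ≤ 9 / 4 + C₀ / 2 + 3 / 2 := by
          have h1 : |A r ^ 2| = |A r| ^ 2 := by rw [abs_pow]
          have h2 : |A r| ^ 2 ≤ (3 / 2) ^ 2 := by
            apply pow_le_pow_left₀ (abs_nonneg _) aA
          rw [h1]
          nlinarith [aA, aRA']
  have aRB' : |r * B' r| ≤ 2 * C₀ := by
    have he : r * B' r = 2 * A r * (r * A' r) + r ^ 2 * A'' r := by rw [hB']; ring
    rw [he]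
    calc |2 * A r * (r * A' r) + r ^ 2 * A'' r| ≤
          |2 * A r * (r * A' r)| + |r ^ 2 * A'' r| := abs_add_le _ _
      _ ≤ 2 * |A r| * |r * A' r| + C₀ / 2 := by
          rw [abs_mul, abs_mul]
          simp only [abs_two]
          nlinarith [aR2A'']
      _ ≤ 2 * C₀ := by nlinarith [aA, aRA', abs_nonneg (A r), abs_nonneg (r * A' r)]
  have aD : |D r| ≤ 100 + 100 * C₀ - 3 / 2 - (9 / 4 + C₀ / 2 + 3 / 2) := by
    rw [hD]
    have h1 : |A r * B r + r * B' r - 2 * B r| ≤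
        |A r| * |B r| + |r * B' r| + 2 * |B r| := by
      calc |A r * B r + r * B' r - 2 * B r| ≤ |A r * B r + r * B' r| + |2 * B r| := abs_sub _ _
        _ ≤ |A r * B r| + |r * B' r| + |2 * B r| := by linarith [abs_add_le (A r * B r) (r * B' r)]
        _ = |A r| * |B r| + |r * B' r| + 2 * |B r| := by
            rw [abs_mul (A r) (B r), abs_mul (2:ℝ) (B r), abs_two]
    nlinarith [aA, aB, aRB', abs_nonneg (B r), abs_nonneg (A r)]
  -- positivity of Phi
  have hPhipos : 0 < Phi α ℓ R lam k r := by
    rw [Phi, if_pos hr0]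
    positivity
  -- assemble
  refine ⟨⟨(hPhi1 r hr).differentiableAt, (hPhi2 r hr).differentiableAt,
    (hPhi3 r hr).differentiableAt⟩, ?_⟩
  rw [hderiv1 r hr, hderiv2 r hr, hderiv3]
  have e1 : r * (Phi α ℓ R lam k r * A r / r) = Phi α ℓ R lam k r * A r := by
    field_simp
  have e2 : r ^ 2 * (Phi α ℓ R lam k r * B r / r ^ 2) = Phi α ℓ R lam k r * B r := by
    field_simp
  have e3 : r ^ 3 * (Phi α ℓ R lam k r * D r / r ^ 3) = Phi α ℓ R lam k r * D r := by
    field_simp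
  rw [e1, e2, e3, abs_mul, abs_mul, abs_mul, abs_of_pos hPhipos]
  have : Phi α ℓ R lam k r * |A r| + Phi α ℓ R lam k r * |B r| + Phi α ℓ R lam k r * |D r| =
      Phi α ℓ R lam k r * (|A r| + |B r| + |D r|) := by ring
  rw [this, mul_comm (100 + 100 * C₀) (Phi α ℓ R lam k r)]
  apply mul_le_mul_of_nonneg_left _ hPhipos.le
  linarith [aA, aB, aD]
theorem stmt_12 (α θ C₀ : ℝ) (hα : α ∈ Set.Ioo (0 : ℝ) 2) (hθ : θ ∈ Set.Ioo (0 : ℝ) (α / 2))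
    (hC₀ : 0 < C₀) :
    ∃ C : ℝ, 0 < C ∧
      ∀ ℓ : ℝ → ℝ, (∀ r : ℝ, 0 < r → 0 < ℓ r) →
        (∀ s r : ℝ, 0 < s → s ≤ r → ℓ s ≤ ℓ r) →
        (∀ r : ℝ, 0 < r → DifferentiableAt ℝ ℓ r) →
        (∀ r : ℝ, 0 < r → DifferentiableAt ℝ (deriv ℓ) r) →
        (∀ r : ℝ, 0 < r → r * deriv ℓ r + |r ^ 2 * deriv (deriv ℓ) r| ≤ C₀ * ℓ r) →
        ∀ R lam k : ℝ, R ∈ Set.Ioc (0 : ℝ) 1 → 0 < lam →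
          lam * ℓ R < min (α - 2 * θ) (2 - α) / 4 → 0 < k →
          ∀ r ∈ Set.Ioo (0 : ℝ) (R / k),
            (DifferentiableAt ℝ (Phi α ℓ R lam k) r ∧
              DifferentiableAt ℝ (deriv (Phi α ℓ R lam k)) r ∧
              DifferentiableAt ℝ (deriv (deriv (Phi α ℓ R lam k))) r) ∧
            (DifferentiableAt ℝ (Psi α ℓ R lam k) r ∧
              DifferentiableAt ℝ (deriv (Psi α ℓ R lam k)) r ∧
              DifferentiableAt ℝ (deriv (deriv (Psi α ℓ R lam k))) r) ∧
            |r * deriv (Phi α ℓ R lam k) r| + |r ^ 2 * deriv (deriv (Phi α ℓ R lam k)) r| +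
                |r ^ 3 * deriv (deriv (deriv (Phi α ℓ R lam k))) r| ≤ C * Phi α ℓ R lam k r ∧
            |r * deriv (Psi α ℓ R lam k) r| + |r ^ 2 * deriv (deriv (Psi α ℓ R lam k)) r| +
                |r ^ 3 * deriv (deriv (deriv (Psi α ℓ R lam k))) r| ≤ C * Psi α ℓ R lam k r := by
  refine ⟨100 + 100 * C₀, by linarith, ?_⟩
  intro ℓ hpos hmono hd1 hd2 hineq R lam k hR hlam0 hlamR hk r hr
  have hPsiPhi : Psi α ℓ R lam k = Phi α ℓ R (-lam) k := by
    funext x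
    rw [Psi, Phi]
    simp [neg_mul, neg_neg]
  have hlR : 0 < ℓ R := hpos R hR.1
  have hhalf : |lam| * ℓ R < 1 / 2 := by
    rw [abs_of_pos hlam0]
    have h1 : min (α - 2 * θ) (2 - α) / 4 ≤ (2 - α) / 4 := by
      apply div_le_div_of_nonneg_right (min_le_right _ _) (by norm_num)
    have h2 : (2 - α) / 4 < 1 / 2 := by
      have := hα.1
      linarith
    linarith
  have hhalf' : |(-lam)| * ℓ R < 1 / 2 := by rwa [abs_neg]
  have h1 := phi_master α C₀ hα hC₀ ℓ hpos hmono hd1 hd2 hineq R lam k hR hhalf hk r hr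
  have h2 := phi_master α C₀ hα hC₀ ℓ hpos hmono hd1 hd2 hineq R (-lam) k hR hhalf' hk r hr
  rw [← hPsiPhi] at h2
  exact ⟨h1.1, h2.1, h1.2, h2.2⟩
end

section
/- Let a, b > 0 and suppose there exists a constant c₀ > 1 such that a ≤ c₀ · n! / bⁿ for every integer n ≥ 0. Then a ≤ e^{3/2} · c₀ · e^{−b/2}. -/
lemma fact_le_half_pow (n : ℕ) : (Nat.factorial n : ℝ) ≤ (((n : ℝ) + 1) / 2) ^ n := by
  induction n with
  | zero => simp
  | succ n ih =>
    have hc : (0:ℝ) < (n:ℝ) + 1 := by positivity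
    have hber : (2:ℝ) ≤ (1 + 1/((n:ℝ)+1)) ^ (n+1) := by
      have h0 : (0:ℝ) ≤ 1/((n:ℝ)+1) := by positivity
      have h1 : (-2:ℝ) ≤ 1/((n:ℝ)+1) := by linarith
      have := one_add_mul_le_pow h1 (n+1)
      have h2 : (1:ℝ) + (↑(n+1)) * (1/((n:ℝ)+1)) = 2 := by
        push_cast; field_simp; ring
      linarith [this, h2.symm.le]
    have key : (2:ℝ) * (((n:ℝ)+1)/2) ^ (n+1) ≤ (((n:ℝ)+2)/2) ^ (n+1) := by
      have heq : (((n:ℝ)+2)/2) ^ (n+1) = (1 + 1/((n:ℝ)+1)) ^ (n+1) * (((n:ℝ)+1)/2) ^ (n+1) := by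
        rw [← mul_pow]
        congr 1
        field_simp
        ring
      rw [heq]
      have hpos : (0:ℝ) ≤ (((n:ℝ)+1)/2) ^ (n+1) := by positivity
      exact mul_le_mul_of_nonneg_right hber hpos
    have step : (Nat.factorial (n+1) : ℝ) = ((n:ℝ)+1) * (Nat.factorial n : ℝ) := by
      push_cast [Nat.factorial_succ]; ring
    have h3 : ((n:ℝ)+1) * (Nat.factorial n : ℝ) ≤ ((n:ℝ)+1) * (((n:ℝ)+1)/2)^n :=
      mul_le_mul_of_nonneg_left ih hc.le
    have h4 : ((n:ℝ)+1) * (((n:ℝ)+1)/2)^n = 2 * (((n:ℝ)+1)/2)^(n+1) := by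
      rw [pow_succ]; ring
    calc (Nat.factorial (n+1) : ℝ) = ((n:ℝ)+1) * (Nat.factorial n : ℝ) := step
      _ ≤ 2 * (((n:ℝ)+1)/2)^(n+1) := by rw [← h4]; exact h3
      _ ≤ (((n:ℝ)+2)/2)^(n+1) := key
      _ = ((((n+1:ℕ):ℝ)+1)/2)^(n+1) := by push_cast; ring_nf

theorem stmt_16 (a b c₀ : ℝ) (ha : 0 < a) (hb : 0 < b) (hc₀ : 1 < c₀)
    (h : ∀ n : ℕ, a ≤ c₀ * (Nat.factorial n : ℝ) / b ^ n) :
    a ≤ Real.exp (3 / 2) * c₀ * Real.exp (-b / 2) := by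
  have hc₀pos : (0:ℝ) < c₀ := lt_trans one_pos hc₀
  have hkey : a ≤ c₀ * Real.exp (3/2 - b/2) := by
    by_cases hb3 : b < 3
    · have h0 := h 0
      simp [Nat.factorial] at h0
      have : (1:ℝ) ≤ Real.exp (3/2 - b/2) := by
        rw [← Real.exp_zero]
        apply Real.exp_le_exp.mpr
        linarith
      nlinarith
    · push_neg at hb3
      set n := Nat.floor b with hn
      have hn1 : (n:ℝ) ≤ b := Nat.floor_le hb.le
      have hn2 : b ≤ (n:ℝ) + 1 := (Nat.lt_floor_add_one b).le
      have hbpow : (0:ℝ) < b ^ n := by positivity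
      have hfact : (Nat.factorial n : ℝ) ≤ (((n:ℝ)+1)/2)^n := fact_le_half_pow n
      have step1 : a ≤ c₀ * ((((n:ℝ)+1)/(2*b))^n) := by
        have := h n
        have heq : (((n:ℝ)+1)/(2*b))^n = (((n:ℝ)+1)/2)^n / b^n := by
          rw [div_pow, div_pow]
          rw [mul_pow]
          field_simp
        rw [heq]
        calc a ≤ c₀ * (Nat.factorial n : ℝ) / b ^ n := this
          _ ≤ c₀ * ((((n:ℝ)+1)/2)^n) / b^n := by gcongr
          _ = c₀ * ((((n:ℝ)+1)/2)^n / b^n) := by ring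
      have step2 : (((n:ℝ)+1)/(2*b))^n ≤ Real.exp (3/2 - b/2) := by
        have hlog2 : (1:ℝ)/2 < Real.log 2 := by
          have := Real.log_two_gt_d9
          linarith
        -- (n+1)/(2b) ≤ exp(1/b)/2
        have hA : ((n:ℝ)+1)/(2*b) ≤ Real.exp (1/b) / 2 := by
          have h1 : ((n:ℝ)+1) ≤ b + 1 := by linarith
          have h2 : (1:ℝ) + 1/b ≤ Real.exp (1/b) := by
            have := Real.add_one_le_exp (1/b)
            linarith
          rw [div_le_div_iff₀ (by positivity) (by norm_num)]
          have : ((n:ℝ)+1) ≤ b * (1 + 1/b) := by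
            rw [mul_add, mul_one_div, div_self hb.ne']
            linarith
          calc ((n:ℝ)+1) * 2 ≤ (b * (1 + 1/b)) * 2 := by linarith
            _ ≤ (b * Real.exp (1/b)) * 2 := by nlinarith [hb]
            _ = Real.exp (1/b) * (2*b) := by ring
        have hApos : (0:ℝ) ≤ ((n:ℝ)+1)/(2*b) := by positivity
        have hstep : (((n:ℝ)+1)/(2*b))^n ≤ (Real.exp (1/b) / 2)^n :=
          pow_le_pow_left₀ hApos hA n
        have e1 : Real.exp ((n:ℝ)/b) = Real.exp (1/b) ^ n := by
          rw [show ((n:ℝ)/b) = (n:ℝ)*(1/b) by ring, Real.exp_nat_mul]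
        have e2 : Real.exp ((n:ℝ)*Real.log 2) = 2 ^ n := by
          rw [Real.exp_nat_mul, Real.exp_log two_pos]
        have heq2 : (Real.exp (1/b) / 2)^n = Real.exp ((n:ℝ)/b - (n:ℝ) * Real.log 2) := by
          rw [Real.exp_sub, e1, e2, div_pow]
        have hfin : Real.exp ((n:ℝ)/b - (n:ℝ) * Real.log 2) ≤ Real.exp (3/2 - b/2) := by
          apply Real.exp_le_exp.mpr
          have hnb : (n:ℝ)/b ≤ 1 := by
            rw [div_le_one hb]; exact hn1
          have hbn : b - 1 ≤ (n:ℝ) := by linarith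
          have hn0 : (0:ℝ) ≤ (n:ℝ) := Nat.cast_nonneg n
          -- n/b - n log2 ≤ 1 - (b-1)/2 ≤ 3/2 - b/2
          have : (b-1) * (1/2) ≤ (n:ℝ) * Real.log 2 := by
            have hb1 : (0:ℝ) ≤ b - 1 := by linarith
            calc (b-1) * (1/2) ≤ (n:ℝ) * (1/2) := by nlinarith
              _ ≤ (n:ℝ) * Real.log 2 := by nlinarith
          linarith
        calc (((n:ℝ)+1)/(2*b))^n ≤ (Real.exp (1/b) / 2)^n := hstep
          _ = Real.exp ((n:ℝ)/b - (n:ℝ) * Real.log 2) := heq2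
          _ ≤ Real.exp (3/2 - b/2) := hfin
      calc a ≤ c₀ * ((((n:ℝ)+1)/(2*b))^n) := step1
        _ ≤ c₀ * Real.exp (3/2 - b/2) := mul_le_mul_of_nonneg_left step2 hc₀pos.le
  calc a ≤ c₀ * Real.exp (3/2 - b/2) := hkey
    _ = Real.exp (3/2) * c₀ * Real.exp (-b/2) := by
        rw [Real.exp_sub]
        rw [show (-b/2 : ℝ) = -(b/2) by ring, Real.exp_neg]
        field_simp
end

section
/- Let a, b > 0 and suppose there exists a constant c₀ > 1 such that a ≥ bⁿ / (c₀ · n!) for every integer n ≥ 0. Then a ≥ e^{−3/2} · c₀^{−1} · e^{b/2}. -/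
theorem stmt_17 (a b c₀ : ℝ) (ha : 0 < a) (hb : 0 < b) (hc₀ : 1 < c₀)
    (h : ∀ n : ℕ, b ^ n / (c₀ * (Nat.factorial n : ℝ)) ≤ a) :
    Real.exp (-(3 / 2)) * c₀⁻¹ * Real.exp (b / 2) ≤ a := by
  have hc₀' : 0 < c₀ := lt_trans one_pos hc₀
  -- exp (b/2) as a sum
  have hsum : HasSum (fun n : ℕ => (b / 2) ^ n / (Nat.factorial n : ℝ)) (Real.exp (b / 2)) := by
    have := NormedSpace.expSeries_div_hasSum_exp (b / 2)
    rwa [← Real.exp_eq_exp_ℝ] at this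
  have hgeo : HasSum (fun n : ℕ => a * c₀ * (1 / 2 : ℝ) ^ n) (a * c₀ * 2) := by
    have := (hasSum_geometric_of_lt_one (by norm_num : (0:ℝ) ≤ 1/2) (by norm_num)).mul_left (a * c₀)
    norm_num at this ⊢
    exact this
  have hle : Real.exp (b / 2) ≤ a * c₀ * 2 := by
    refine hasSum_le (fun n => ?_) hsum hgeo
    have hn := h n
    have hfac : (0 : ℝ) < (Nat.factorial n : ℝ) := by positivity
    have h1 : b ^ n / (Nat.factorial n : ℝ) ≤ a * c₀ := by
      rw [div_le_iff₀ hfac]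
      rw [div_le_iff₀ (by positivity)] at hn
      nlinarith
    have : (b / 2) ^ n / (Nat.factorial n : ℝ) = b ^ n / (Nat.factorial n : ℝ) * (1/2)^n := by
      rw [div_pow, one_div, inv_pow]
      ring
    rw [this]
    exact mul_le_mul_of_nonneg_right h1 (by positivity)
  -- exp(-(3/2)) ≤ 1/2
  have hexp : Real.exp (-(3 / 2)) ≤ 1 / 2 := by
    rw [Real.exp_neg]
    rw [inv_le_comm₀ (Real.exp_pos _) (by norm_num)]
    calc (1/2 : ℝ)⁻¹ = 2 := by norm_num
      _ ≤ 1 + 3/2 := by norm_num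
      _ ≤ Real.exp (3/2) := by
          have := Real.add_one_le_exp (3/2 : ℝ); linarith
  calc Real.exp (-(3 / 2)) * c₀⁻¹ * Real.exp (b / 2)
      ≤ (1/2) * c₀⁻¹ * (a * c₀ * 2) := by
        apply mul_le_mul
        · exact mul_le_mul_of_nonneg_right hexp (by positivity)
        · exact hle
        · exact (Real.exp_pos _).le
        · positivity
    _ = a := by field_simp
end

section
/- Let d ≥ 2 and let ℓ be a regular global modulus of continuity. Then both D_ℓ and D_{−ℓ} are C^{1,ℓ} open sets: there exist a localization constant R₀ ∈ (0,1] and Λ > 0 such that for D ∈ {D_ℓ, D_{−ℓ}} and every Q ∈ ∂D there are a C¹ function Γ_Q:ℝ^{d−1}→ℝ with Γ_Q(0)=0, ∇Γ_Q(0)=0 and |∇Γ_Q(x̃)−∇Γ_Q(ỹ)| ≤ Λ·ℓ(|x̃−ỹ|) for all x̃ ≠ ỹ in ℝ^{d−1}, and an affine isometry Φ_Q of ℝ^d with Φ_Q(0)=Q such that D ∩ B(Q,R₀) = Φ_Q({y=(ỹ,y_d) ∈ B(0,R₀) : y_d > Γ_Q(ỹ)}). -/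
open Metric Filter Set Topology

/-- The special open set `D_ℓ = {x : x_d > Γ_ℓ(x̃)}`. -/
noncomputable def Dp (d : ℕ) (h0 : 0 < d) (ℓ : ℝ → ℝ) : Set (EuclideanSpace ℝ (Fin d)) :=
  {x | gEll ℓ (x ⟨0, h0⟩) < x ⟨d - 1, Nat.sub_lt h0 Nat.one_pos⟩}

/-- The special open set `D_{-ℓ} = {x : x_d > -Γ_ℓ(x̃)}`. -/
noncomputable def Dm (d : ℕ) (h0 : 0 < d) (ℓ : ℝ → ℝ) : Set (EuclideanSpace ℝ (Fin d)) :=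
  {x | -gEll ℓ (x ⟨0, h0⟩) < x ⟨d - 1, Nat.sub_lt h0 Nat.one_pos⟩}

noncomputable def pg (ℓ : ℝ → ℝ) (t : ℝ) : ℝ := if 0 < t then ℓ t + t * deriv ℓ t else 0

lemma ell_small {ℓ : ℝ → ℝ} (hlim : Tendsto ℓ (𝓝[>] (0:ℝ)) (𝓝 0)) {ε : ℝ} (hε : 0 < ε) :
    ∃ δ : ℝ, 0 < δ ∧ ∀ r : ℝ, 0 < r → r < δ → ℓ r < ε := by
  have h1 : ∀ᶠ r in 𝓝[>] (0:ℝ), ℓ r ∈ Iio ε := hlim (Iio_mem_nhds hε)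
  rw [eventually_nhdsWithin_iff] at h1
  obtain ⟨δ, hδ, h⟩ := Metric.eventually_nhds_iff.1 h1
  refine ⟨δ, hδ, fun r hr hrδ => ?_⟩
  have : dist r 0 < δ := by rw [Real.dist_eq, sub_zero, abs_of_pos hr]; exact hrδ
  exact h this hr

lemma ell_scale {ℓ : ℝ → ℝ} {c : ℝ}
    (halmost : ∀ s r : ℝ, 0 < s → s ≤ r → ℓ r / r ≤ c * (ℓ s / s)) :
    ∀ K r : ℝ, 1 ≤ K → 0 < r → ℓ (K * r) ≤ c * K * ℓ r := by
  intro K r hK hr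
  have hKr : 0 < K * r := mul_pos (lt_of_lt_of_le one_pos hK) hr
  have h1 := halmost r (K * r) hr (le_mul_of_one_le_left hr.le hK)
  have h2 : ℓ (K * r) ≤ c * (ℓ r / r) * (K * r) := by
    rw [← div_le_iff₀ hKr]; exact h1
  calc ℓ (K * r) ≤ c * (ℓ r / r) * (K * r) := h2
    _ = c * K * ℓ r := by field_simp

lemma deriv_ell_nonneg {ℓ : ℝ → ℝ}
    (hmono : ∀ s r : ℝ, 0 < s → s ≤ r → ℓ s ≤ ℓ r)
    (hdiff1 : ∀ r : ℝ, 0 < r → DifferentiableAt ℝ ℓ r) :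
    ∀ r : ℝ, 0 < r → 0 ≤ deriv ℓ r := by
  intro r hr
  have hd := (hdiff1 r hr).hasDerivAt
  rw [hasDerivAt_iff_tendsto_slope] at hd
  have h2 : Tendsto (slope ℓ r) (𝓝[>] r) (𝓝 (deriv ℓ r)) :=
    hd.mono_left (nhdsWithin_mono r (fun x hx => ne_of_gt hx))
  refine ge_of_tendsto h2 ?_
  filter_upwards [self_mem_nhdsWithin] with x hx
  have hx' : r < x := hx
  have : ℓ r ≤ ℓ x := hmono r x hr hx'.le
  rw [slope_def_field]
  exact div_nonneg (by linarith) (by linarith)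

lemma gEll_hasDerivAt {ℓ : ℝ → ℝ}
    (hpos : ∀ r : ℝ, 0 < r → 0 < ℓ r)
    (hlim : Tendsto ℓ (𝓝[>] (0:ℝ)) (𝓝 0))
    (hdiff1 : ∀ r : ℝ, 0 < r → DifferentiableAt ℝ ℓ r) :
    ∀ t : ℝ, HasDerivAt (gEll ℓ) (pg ℓ t) t := by
  intro t
  rcases lt_trichotomy t 0 with ht | rfl | ht
  · have h0 : HasDerivAt (fun _ : ℝ => (0:ℝ)) 0 t := hasDerivAt_const t 0
    have he : (fun _ : ℝ => (0:ℝ)) =ᶠ[𝓝 t] gEll ℓ := by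
      filter_upwards [Iio_mem_nhds ht] with x hx
      have hx' : ¬ (0 < x) := not_lt.2 (le_of_lt (mem_Iio.1 hx))
      simp [gEll, hx']
    have := h0.congr_of_eventuallyEq he.symm
    simpa [pg, not_lt.2 ht.le] using this
  · -- t = 0
    have : HasDerivAt (gEll ℓ) 0 0 := by
      rw [hasDerivAt_iff_tendsto_slope]
      rw [Metric.tendsto_nhds]
      intro ε hε
      obtain ⟨δ, hδ, hsm⟩ := ell_small hlim hε
      have hball : Metric.ball (0:ℝ) δ ∈ 𝓝 (0:ℝ) := Metric.ball_mem_nhds _ hδ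
      filter_upwards [mem_nhdsWithin_of_mem_nhds hball, self_mem_nhdsWithin] with x hx hxne
      have hxδ : |x| < δ := by simpa [Real.dist_eq] using hx
      rw [slope_def_field, Real.dist_eq]
      rcases lt_or_ge 0 x with hx0 | hx0
      · have : gEll ℓ x = x * ℓ x := by simp [gEll, hx0]
        rw [this]
        have : (x * ℓ x - gEll ℓ 0) / (x - 0) = ℓ x := by
          simp [gEll]; field_simp
        rw [this, sub_zero, abs_of_pos (hpos x hx0)]
        exact hsm x hx0 (lt_of_le_of_lt (le_abs_self x) hxδ)
      · have hx0' : ¬ (0 < x) := not_lt.2 hx0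
        simp [gEll, hx0', hε]
    simpa [pg] using this
  · have hprod : HasDerivAt (fun y => y * ℓ y) (1 * ℓ t + t * deriv ℓ t) t :=
      (hasDerivAt_id t).mul (hdiff1 t ht).hasDerivAt
    have he : (fun y => y * ℓ y) =ᶠ[𝓝 t] gEll ℓ := by
      filter_upwards [Ioi_mem_nhds ht] with x hx
      have hx' : (0:ℝ) < x := mem_Ioi.1 hx
      simp [gEll, hx']
    have := hprod.congr_of_eventuallyEq he.symm
    simpa [pg, ht] using this

lemma pg_nonneg {ℓ : ℝ → ℝ}
    (hpos : ∀ r : ℝ, 0 < r → 0 < ℓ r)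
    (hmono : ∀ s r : ℝ, 0 < s → s ≤ r → ℓ s ≤ ℓ r)
    (hdiff1 : ∀ r : ℝ, 0 < r → DifferentiableAt ℝ ℓ r) :
    ∀ t : ℝ, 0 ≤ pg ℓ t := by
  intro t
  unfold pg
  split_ifs with ht
  · have := deriv_ell_nonneg hmono hdiff1 t ht
    have := hpos t ht
    nlinarith
  · exact le_refl _

lemma pg_modulus {ℓ : ℝ → ℝ} {c : ℝ}
    (hpos : ∀ r : ℝ, 0 < r → 0 < ℓ r)
    (hmono : ∀ s r : ℝ, 0 < s → s ≤ r → ℓ s ≤ ℓ r)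
    (hc : 1 ≤ c)
    (halmost : ∀ s r : ℝ, 0 < s → s ≤ r → ℓ r / r ≤ c * (ℓ s / s))
    (hdiff1 : ∀ r : ℝ, 0 < r → DifferentiableAt ℝ ℓ r)
    (hdiff2 : ∀ r : ℝ, 0 < r → DifferentiableAt ℝ (deriv ℓ) r)
    {Creg : ℝ} (hCreg : 0 < Creg)
    (hreg : ∀ r : ℝ, 0 < r → r * deriv ℓ r + |r ^ 2 * deriv (deriv ℓ) r| ≤ Creg * ℓ r) :
    ∀ s t : ℝ, s ≠ t → |pg ℓ t - pg ℓ s| ≤ ((1+Creg)*(1+2*c) + 3*Creg*c) * ℓ |t - s| := by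
  have hl' := deriv_ell_nonneg hmono hdiff1
  have htl : ∀ r : ℝ, 0 < r → r * deriv ℓ r ≤ Creg * ℓ r := by
    intro r hr
    have h1 := hreg r hr
    have h2 := abs_nonneg (r ^ 2 * deriv (deriv ℓ) r)
    linarith
  have htl2 : ∀ r : ℝ, 0 < r → |r ^ 2 * deriv (deriv ℓ) r| ≤ Creg * ℓ r := by
    intro r hr
    have h1 := hreg r hr
    have h2 : 0 ≤ r * deriv ℓ r := mul_nonneg hr.le (hl' r hr)
    linarith
  have hpgnn : ∀ t : ℝ, 0 ≤ pg ℓ t := by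
    intro t
    unfold pg; split_ifs with ht
    · have h1 := hl' t ht
      have h2 := hpos t ht
      nlinarith
    · exact le_refl _
  have hpgle : ∀ t : ℝ, 0 < t → pg ℓ t ≤ (1 + Creg) * ℓ t := by
    intro t ht
    have h1 := htl t ht
    unfold pg; rw [if_pos ht]; linarith
  -- main claim for ordered s < t
  have key : ∀ s t : ℝ, s < t → |pg ℓ t - pg ℓ s| ≤ ((1+Creg)*(1+2*c) + 3*Creg*c) * ℓ (t - s) := by
    intro s t hst
    have hts : 0 < t - s := by linarith
    have hlts := hpos _ hts
    have hCc : (0:ℝ) < 3*Creg*c := by positivity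
    rcases le_or_gt t 0 with ht0 | ht0
    · -- both ≤ 0 : both pg vanish
      have h1 : pg ℓ t = 0 := by unfold pg; rw [if_neg (not_lt.2 ht0)]
      have h2 : pg ℓ s = 0 := by unfold pg; rw [if_neg (not_lt.2 (by linarith))]
      rw [h1, h2, sub_zero, abs_zero]
      positivity
    rcases le_or_gt s 0 with hs0 | hs0
    · -- s ≤ 0 < t
      have h2 : pg ℓ s = 0 := by unfold pg; rw [if_neg (not_lt.2 hs0)]
      rw [h2, sub_zero, abs_of_nonneg (hpgnn t)]
      have h3 : pg ℓ t ≤ (1 + Creg) * ℓ t := hpgle t ht0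
      have h4 : ℓ t ≤ ℓ (t - s) := hmono t (t - s) ht0 (by linarith)
      have h5 : (1:ℝ) ≤ 1 + 2*c := by linarith
      nlinarith [mul_le_mul_of_nonneg_left h4 (by positivity : (0:ℝ) ≤ 1 + Creg)]
    rcases le_or_gt t (2 * s) with ht2 | ht2
    · -- 0 < s < t ≤ 2s : mean value estimate
      set C : ℝ := 3*Creg*c * (ℓ (t-s) / (t-s)) with hC
      have hderiv : ∀ x ∈ Icc s t, HasDerivWithinAt (pg ℓ)
          (2 * deriv ℓ x + x * deriv (deriv ℓ) x) (Icc s t) x := by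
        intro x hx
        have hx0 : 0 < x := lt_of_lt_of_le hs0 hx.1
        have hd : HasDerivAt (fun y => ℓ y + y * deriv ℓ y)
            (deriv ℓ x + (1 * deriv ℓ x + x * deriv (deriv ℓ) x)) x :=
          ((hdiff1 x hx0).hasDerivAt).add ((hasDerivAt_id x).mul (hdiff2 x hx0).hasDerivAt)
        have he : (fun y => ℓ y + y * deriv ℓ y) =ᶠ[𝓝 x] pg ℓ := by
          filter_upwards [Ioi_mem_nhds hx0] with y hy
          have hy' : (0:ℝ) < y := mem_Ioi.1 hy
          simp [pg, hy']
        have := hd.congr_of_eventuallyEq he.symm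
        have h2 : (2:ℝ) * deriv ℓ x + x * deriv (deriv ℓ) x
            = deriv ℓ x + (1 * deriv ℓ x + x * deriv (deriv ℓ) x) := by ring
        rw [h2]
        exact this.hasDerivWithinAt
      have hbound : ∀ x ∈ Icc s t, ‖2 * deriv ℓ x + x * deriv (deriv ℓ) x‖ ≤ C := by
        intro x hx
        have hx0 : 0 < x := lt_of_lt_of_le hs0 hx.1
        have hb1 : deriv ℓ x ≤ Creg * ℓ x / x := by
          rw [le_div_iff₀ hx0]; have := htl x hx0; linarith [mul_comm (deriv ℓ x) x]
        have hb2 : |x * deriv (deriv ℓ) x| ≤ Creg * ℓ x / x := by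
          rw [le_div_iff₀ hx0]
          have h3 : |x * deriv (deriv ℓ) x| * x = |x ^ 2 * deriv (deriv ℓ) x| := by
            rw [abs_mul, abs_mul, abs_of_pos hx0, abs_of_pos (pow_pos hx0 2)]
            ring
          rw [h3]; exact htl2 x hx0
        have hsx := hx.1
        have hb3 : ℓ x / x ≤ c * (ℓ (t-s) / (t-s)) := halmost (t-s) x hts (by linarith)
        have hnn : 0 ≤ deriv ℓ x := hl' x hx0
        rw [Real.norm_eq_abs]
        have h4 : |2 * deriv ℓ x + x * deriv (deriv ℓ) x| ≤ 2 * deriv ℓ x + |x * deriv (deriv ℓ) x| := by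
          have := abs_add_le (2 * deriv ℓ x) (x * deriv (deriv ℓ) x)
          rw [abs_of_nonneg (by linarith : (0:ℝ) ≤ 2 * deriv ℓ x)] at this
          exact this
        have h5 : 2 * deriv ℓ x + |x * deriv (deriv ℓ) x| ≤ 3 * (Creg * ℓ x / x) := by linarith
        have h6 : Creg * ℓ x / x = Creg * (ℓ x / x) := by ring
        have h7 : 3 * (Creg * ℓ x / x) ≤ C := by
          rw [h6, hC]
          nlinarith [hb3, hCreg.le]
        linarith
      have := Convex.norm_image_sub_le_of_norm_hasDerivWithin_le hderiv hbound (convex_Icc s t)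
        (left_mem_Icc.2 hst.le) (right_mem_Icc.2 hst.le)
      rw [Real.norm_eq_abs, Real.norm_eq_abs] at this
      have h8 : C * |t - s| = 3*Creg*c * ℓ (t-s) := by
        rw [hC, abs_of_pos hts]; field_simp
      rw [h8] at this
      have h9 : (0:ℝ) ≤ (1+Creg)*(1+2*c) * ℓ (t-s) := by positivity
      linarith
    · -- 0 < s, 2s < t
      have h1 : |pg ℓ t - pg ℓ s| ≤ pg ℓ t + pg ℓ s := by
        have := hpgnn t; have := hpgnn s
        rw [abs_sub_le_iff]; constructor <;> linarith
      have h2 : ℓ s ≤ ℓ (t - s) := hmono s (t-s) hs0 (by linarith)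
      have h3 : ℓ t ≤ 2 * c * ℓ (t - s) := by
        have h4 := halmost (t-s) t hts (by linarith)
        have h5 : ℓ t ≤ c * (ℓ (t-s) / (t-s)) * t := by
          rw [← div_le_iff₀ ht0]
          · exact h4
        have h6 : t ≤ 2 * (t - s) := by linarith
        have h7 : 0 < c * (ℓ (t-s)/(t-s)) := by positivity
        calc ℓ t ≤ c * (ℓ (t-s) / (t-s)) * t := h5
          _ ≤ c * (ℓ (t-s) / (t-s)) * (2 * (t-s)) := by nlinarith
          _ = 2 * c * ℓ (t-s) := by field_simp
      have h4 := hpgle t ht0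
      have h5 := hpgle s hs0
      have hC1 : (0:ℝ) < 1 + Creg := by linarith
      have h6 : pg ℓ t + pg ℓ s ≤ (1+Creg) * (ℓ t + ℓ s) := by linarith
      have h7 : ℓ t + ℓ s ≤ (1 + 2*c) * ℓ (t-s) := by linarith
      calc |pg ℓ t - pg ℓ s| ≤ (1+Creg) * (ℓ t + ℓ s) := le_trans h1 h6
        _ ≤ (1+Creg) * ((1+2*c) * ℓ (t-s)) := by nlinarith
        _ ≤ ((1+Creg)*(1+2*c) + 3*Creg*c) * ℓ (t-s) := by nlinarith
  intro s t hst
  rcases lt_or_gt_of_ne hst with h | h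
  · rw [abs_of_pos (by linarith : (0:ℝ) < t - s)]
    exact key s t h
  · have := key t s h
    rw [abs_sub_comm, abs_of_neg (by linarith : t - s < 0)]
    rw [show -(t-s) = s - t by ring]
    exact this

private lemma auxDen {m pt co si : ℝ} (hcopos : 0 < co) (hco2 : co ^ 2 * (1 + m ^ 2) = 1)
    (hsi : si = m * co) (hptm : |pt - m| ≤ (1 + |m|) / 4) :
    (2 * co)⁻¹ ≤ co + si * pt := by
  have habs : -(|m| * ((1 + |m|) / 4)) ≤ m * (pt - m) := by
    have h1 : |m * (pt - m)| = |m| * |pt - m| := abs_mul m _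
    have h2 := neg_abs_le (m * (pt - m))
    have h3 : |m| * |pt - m| ≤ |m| * ((1 + |m|) / 4) :=
      mul_le_mul_of_nonneg_left hptm (abs_nonneg m)
    rw [h1] at h2
    linarith
  have h1mp : (1 + m ^ 2) / 2 ≤ 1 + m * pt := by
    have hexp : m * pt = m ^ 2 + m * (pt - m) := by ring
    rw [hexp]
    nlinarith [sq_abs m, sq_nonneg (|m| - 1), abs_nonneg m]
  have h2 : co + si * pt = co * (1 + m * pt) := by rw [hsi]; ring
  rw [h2]
  have h3 : co * ((1 + m ^ 2) / 2) ≤ co * (1 + m * pt) :=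
    mul_le_mul_of_nonneg_left h1mp hcopos.le
  have h4 : co * ((1 + m ^ 2) / 2) = (2 * co)⁻¹ := by
    apply eq_inv_of_mul_eq_one_left
    nlinarith [hco2]
  linarith

private lemma auxSq {co : ℝ} (hcopos : 0 < co) (hcole : co ≤ 1) : (2 * co) ^ 2 ≤ 4 := by
  nlinarith

private lemma auxMul {co x y : ℝ} (hcopos : 0 < co) (hcole : co ≤ 1) (hx : 0 ≤ x)
    (hxy : x ≤ y) : 2 * co * x ≤ 2 * y := by nlinarith

private lemma auxFin {X L c A co : ℝ} (hX : 0 ≤ X) (hL : 0 ≤ L) (hc : 0 < c) (hA : 0 < A)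
    (hsq : (2 * co) ^ 2 ≤ 4) (hsqnn : 0 ≤ (2 * co) ^ 2)
    (hXle : X ≤ 2 * c * A * L) : X * (2 * co) ^ 2 ≤ 8 * c * A * L := by
  have h1 : X * (2 * co) ^ 2 ≤ X * 4 := mul_le_mul_of_nonneg_left hsq hX
  nlinarith

set_option maxHeartbeats 1000000 in
lemma key_graph {ℓ : ℝ → ℝ} {c : ℝ}
    (hpos : ∀ r : ℝ, 0 < r → 0 < ℓ r)
    (hmono : ∀ s r : ℝ, 0 < s → s ≤ r → ℓ s ≤ ℓ r)
    (hlim : Tendsto ℓ (𝓝[>] (0:ℝ)) (𝓝 0))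
    (hc : 1 ≤ c)
    (hscale : ∀ K r : ℝ, 1 ≤ K → 0 < r → ℓ (K * r) ≤ c * K * ℓ r)
    {A : ℝ} (hA : 1 ≤ A)
    {r₀ : ℝ} (hr₀ : 0 < r₀) (hδ : ℓ r₀ ≤ 1 / (4 * A * c))
    (h p : ℝ → ℝ)
    (hderiv : ∀ t, HasDerivAt h (p t) t)
    (hsign : ∀ t t', 0 ≤ p t * p t')
    (hmod : ∀ s t : ℝ, s ≠ t → |p t - p s| ≤ A * ℓ |t - s|)
    (a : ℝ) :
    ∃ co si : ℝ, co ^ 2 + si ^ 2 = 1 ∧ 0 < co ∧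
      ∃ G : ℝ → ℝ, ContDiff ℝ 1 G ∧ G 0 = 0 ∧ deriv G 0 = 0 ∧
        (∀ u v : ℝ, u ≠ v → |deriv G u - deriv G v| ≤ 8 * c * A * ℓ |u - v|) ∧
        ∀ y1 yd : ℝ, |y1| ≤ r₀ →
          (h (a + co * y1 - si * yd) < h a + si * y1 + co * yd ↔ G y1 < yd) := by
  have hA0 : (0:ℝ) < A := lt_of_lt_of_le one_pos hA
  have hc0 : (0:ℝ) < c := lt_of_lt_of_le one_pos hc
  set m := p a with hm
  have h1m : (0:ℝ) < 1 + m ^ 2 := by positivity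
  set co := (Real.sqrt (1 + m ^ 2))⁻¹ with hco
  have hsq : Real.sqrt (1 + m ^ 2) ^ 2 = 1 + m ^ 2 := Real.sq_sqrt h1m.le
  have hsqpos : 0 < Real.sqrt (1 + m ^ 2) := Real.sqrt_pos.2 h1m
  have hcopos : 0 < co := inv_pos.2 hsqpos
  have hco2 : co ^ 2 * (1 + m ^ 2) = 1 := by
    rw [hco, inv_pow, inv_mul_eq_div, div_eq_one_iff_eq (by positivity)]
    exact hsq.symm
  set si := m * co with hsi
  have hcs : co ^ 2 + si ^ 2 = 1 := by rw [hsi]; nlinarith [hco2]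
  have hsqge1 : 1 ≤ Real.sqrt (1 + m ^ 2) := by
    have h1 := Real.sqrt_le_sqrt (show (1:ℝ) ≤ 1 + m ^ 2 by nlinarith)
    rwa [Real.sqrt_one] at h1
  have hcole : co ≤ 1 := by
    rw [hco]
    exact inv_le_one_of_one_le₀ hsqge1
  have hcoinv : co⁻¹ = Real.sqrt (1 + m ^ 2) := by rw [hco, inv_inv]
  have hsqle : Real.sqrt (1 + m ^ 2) ≤ 1 + |m| := by
    rw [show (1:ℝ) + |m| = Real.sqrt ((1 + |m|) ^ 2) by rw [Real.sqrt_sq (by positivity)]]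
    apply Real.sqrt_le_sqrt
    nlinarith [sq_abs m, abs_nonneg m]
  have hinvge1 : 1 ≤ co⁻¹ := by rw [hcoinv]; exact hsqge1
  have hinvle : co⁻¹ ≤ 1 + |m| := by rw [hcoinv]; exact hsqle
  have hsp : ∀ t, 0 ≤ si * p t := by
    intro t
    have h1 : si * p t = co * (p a * p t) := by rw [hsi, hm]; ring
    rw [h1]
    exact mul_nonneg hcopos.le (hsign a t)
  clear hco hcoinv hsq hsqpos hsqge1 hsqle
  clear_value co si
  set φ : ℝ → ℝ := fun t => co * (t - a) + si * (h t - h a) with hφ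
  have hφd : ∀ t, HasDerivAt φ (co + si * p t) t := by
    intro t
    have h1 : HasDerivAt (fun t => co * (t - a)) (co * 1) t :=
      ((hasDerivAt_id t).sub_const a).const_mul co
    have h2 : HasDerivAt (fun t => si * (h t - h a)) (si * p t) t :=
      ((hderiv t).sub_const (h a)).const_mul si
    have h3 := h1.add h2
    rw [mul_one] at h3
    exact h3
  have hφpos : ∀ t, 0 < co + si * p t := fun t =>
    lt_of_lt_of_le hcopos (le_add_of_nonneg_right (hsp t))
  have hφcont : Continuous φ := by
    rw [continuous_iff_continuousAt]
    exact fun t => (hφd t).differentiableAt.continuousAt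
  have hφmono : StrictMono φ := strictMono_of_hasDerivAt_pos hφd hφpos
  have hshm : Monotone (fun t => si * h t) :=
    monotone_of_hasDerivAt_nonneg (f' := fun t => si * p t)
      (fun t => (hderiv t).const_mul si) (fun t => hsp t)
  have hφa : φ a = 0 := by simp [hφ]
  have hφlow : ∀ t t' : ℝ, t' ≤ t → co * (t - t') ≤ φ t - φ t' := by
    intro t t' htt
    have h1 : si * h t' ≤ si * h t := hshm htt
    have h2 : φ t - φ t' = co * (t - t') + (si * h t - si * h t') := by
      simp only [hφ]; ring
    linarith
  have hsurj : Function.Surjective φ := by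
    apply hφcont.surjective
    · have hbase : Tendsto (fun t : ℝ => co * (t - a)) atTop atTop := by
        have h1 : Tendsto (fun t : ℝ => t - a) atTop atTop :=
          tendsto_atTop_add_const_right atTop (-a) tendsto_id
        exact h1.const_mul_atTop hcopos
      apply tendsto_atTop_mono' atTop ?_ hbase
      filter_upwards [eventually_ge_atTop a] with t ht
      have := hφlow t a ht
      rw [hφa, sub_zero] at this
      exact this
    · have hbase : Tendsto (fun t : ℝ => co * (t - a)) atBot atBot := by
        have h1 : Tendsto (fun t : ℝ => t - a) atBot atBot :=
          tendsto_atBot_add_const_right atBot (-a) tendsto_id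
        exact h1.const_mul_atBot hcopos
      apply tendsto_atBot_mono' atBot ?_ hbase
      filter_upwards [eventually_le_atBot a] with t ht
      have := hφlow a t ht
      rw [hφa, zero_sub] at this
      have h2 : co * (a - t) = -(co * (t - a)) := by ring
      linarith
  set ρ : ℝ → ℝ := fun u => (StrictMono.orderIsoOfSurjective φ hφmono hsurj).symm u with hρ
  have hφρ : ∀ u, φ (ρ u) = u := fun u =>
    StrictMono.orderIsoOfSurjective_self_symm_apply φ hφmono hsurj u
  have hρφ : ∀ t, ρ (φ t) = t := fun t =>
    StrictMono.orderIsoOfSurjective_symm_apply_self φ hφmono hsurj t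
  have hρcont : Continuous ρ := OrderIso.continuous _
  have hρmono : Monotone ρ := fun u v huv =>
    ((StrictMono.orderIsoOfSurjective φ hφmono hsurj).symm.le_iff_le).2 huv
  have hρa : ρ 0 = a := by rw [← hφa, hρφ]
  have hρd : ∀ u, HasDerivAt ρ ((co + si * p (ρ u))⁻¹) u := fun u =>
    HasDerivAt.of_local_left_inverse hρcont.continuousAt (hφd (ρ u))
      (ne_of_gt (hφpos _)) (Eventually.of_forall hφρ)
  -- continuity of p
  have hpc : Continuous p := by
    rw [continuous_iff_continuousAt]
    intro b
    rw [Metric.continuousAt_iff]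
    intro ε hε
    obtain ⟨δ, hδ0, hsm⟩ := ell_small hlim (show (0:ℝ) < ε / (2 * A) by positivity)
    refine ⟨δ, hδ0, fun {x} hx => ?_⟩
    rcases eq_or_ne x b with rfl | hne
    · simpa using hε
    · have h1 := hmod b x (Ne.symm hne)
      have h2 : (0:ℝ) < |x - b| := abs_pos.2 (sub_ne_zero.2 hne)
      have h3 : |x - b| < δ := by rwa [Real.dist_eq] at hx
      have h4 := hsm _ h2 h3
      rw [Real.dist_eq]
      calc |p x - p b| ≤ A * ℓ |x - b| := h1
        _ < A * (ε / (2 * A)) := by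
            exact mul_lt_mul_of_pos_left h4 hA0
        _ ≤ ε := by rw [mul_div_assoc']; rw [div_le_iff₀ (by positivity : (0:ℝ) < 2*A)]; nlinarith
  set k : ℝ → ℝ := fun t => (co * p t - si) / (co + si * p t) with hk
  have hkc : Continuous k := by
    apply Continuous.div
    · exact (continuous_const.mul hpc).sub continuous_const
    · exact continuous_const.add (continuous_const.mul hpc)
    · exact fun t => (hφpos t).ne'
  have hka : k a = 0 := by
    have h1 : co * p a - si = 0 := by rw [hsi, hm]; ring
    simp only [hk, h1, zero_div]
  set clamp : ℝ → ℝ := fun v => max (-r₀) (min r₀ v) with hclamp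
  have hclampc : Continuous clamp := continuous_const.max (continuous_const.min continuous_id)
  have hclamp_mem : ∀ v, clamp v ∈ Icc (-r₀) r₀ := by
    intro v
    constructor
    · exact le_max_left _ _
    · exact max_le (by linarith) (min_le_left _ _)
  have hclamp_id : ∀ v ∈ Icc (-r₀) r₀, clamp v = v := by
    intro v hv
    simp only [hclamp]
    rw [min_eq_right hv.2, max_eq_right hv.1]
  have hclamp_lip : ∀ u v, |clamp u - clamp v| ≤ |u - v| := by
    intro u v
    have h1 : |min r₀ u - min r₀ v| ≤ |u - v| := by
      have h2 := abs_min_sub_min_le_max r₀ u r₀ v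
      simpa using h2
    have h3 := abs_max_sub_max_le_max (-r₀) (min r₀ u) (-r₀) (min r₀ v)
    simp only [sub_self, abs_zero] at h3
    have h4 : max 0 |min r₀ u - min r₀ v| = |min r₀ u - min r₀ v| :=
      max_eq_right (abs_nonneg _)
    rw [h4] at h3
    simp only [hclamp]
    exact le_trans h3 h1
  set q : ℝ → ℝ := fun u => k (ρ (clamp u)) with hq
  have hqc : Continuous q := hkc.comp (hρcont.comp hclampc)
  set G : ℝ → ℝ := fun u => ∫ v in (0:ℝ)..u, q v with hG
  have hGd : ∀ u, HasDerivAt G (q u) u := by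
    intro u
    exact intervalIntegral.integral_hasDerivAt_right (hqc.intervalIntegrable 0 u)
      (hqc.stronglyMeasurableAtFilter _ _) hqc.continuousAt
  have hderivG : deriv G = q := funext fun u => (hGd u).deriv
  have hcontDiffG : ContDiff ℝ 1 G :=
    contDiff_one_iff_deriv.2 ⟨fun u => (hGd u).differentiableAt, by rw [hderivG]; exact hqc⟩
  have hG0 : G 0 = 0 := intervalIntegral.integral_same
  have hclamp0 : clamp 0 = 0 := hclamp_id 0 ⟨by linarith, hr₀.le⟩
  have hdG0 : deriv G 0 = 0 := by
    rw [hderivG]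
    simp only [hq, hclamp0, hρa, hka]
  set γ : ℝ → ℝ := fun u => -si * (ρ u - a) + co * (h (ρ u) - h a) with hγ
  have hγd : ∀ u, HasDerivAt γ (k (ρ u)) u := by
    intro u
    have h1 : HasDerivAt (fun u => -si * (ρ u - a)) (-si * (co + si * p (ρ u))⁻¹) u :=
      ((hρd u).sub_const a).const_mul (-si)
    have h2 : HasDerivAt (fun u => co * (h (ρ u) - h a))
        (co * (p (ρ u) * (co + si * p (ρ u))⁻¹)) u :=
      (((hderiv (ρ u)).comp u (hρd u)).sub_const (h a)).const_mul co
    have h3 := h1.add h2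
    have hne : co + si * p (ρ u) ≠ 0 := (hφpos (ρ u)).ne'
    have h4 : -si * (co + si * p (ρ u))⁻¹ + co * (p (ρ u) * (co + si * p (ρ u))⁻¹)
        = k (ρ u) := by
      simp only [hk]
      field_simp
      ring
    rw [h4] at h3
    exact h3
  have hγ0 : γ 0 = 0 := by simp [hγ, hρa]
  have hGeq : ∀ u ∈ Icc (-r₀) r₀, G u = γ u := by
    intro u hu
    have hsub : uIcc (0:ℝ) u ⊆ Icc (-r₀) r₀ := by
      intro x hx
      rw [Set.mem_uIcc] at hx
      constructor
      · rcases hx with ⟨h1, _⟩ | ⟨h1, _⟩ <;> [linarith; linarith [hu.1]]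
      · rcases hx with ⟨_, h2⟩ | ⟨_, h2⟩ <;> [linarith [hu.2]; linarith]
    have hint : ∀ x ∈ uIcc (0:ℝ) u, HasDerivAt γ (q x) x := by
      intro x hx
      have hcx : clamp x = x := hclamp_id x (hsub hx)
      have := hγd x
      simp only [hq, hcx]
      exact this
    have hI := intervalIntegral.integral_eq_sub_of_hasDerivAt hint (hqc.intervalIntegrable 0 u)
    simp only [hG]
    rw [hI, hγ0, sub_zero]
  -- range and denominator estimates
  set T := r₀ / co with hT
  have hTpos : 0 < T := div_pos hr₀ hcopos
  have hrange : ∀ u ∈ Icc (-r₀) r₀, |ρ u - a| ≤ T := by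
    intro u hu
    rcases le_total a (ρ u) with hh | hh
    · have h1 := hφlow (ρ u) a hh
      rw [hφρ, hφa, sub_zero] at h1
      rw [abs_of_nonneg (by linarith)]
      rw [hT, le_div_iff₀ hcopos]
      have h2 : co * (ρ u - a) ≤ r₀ := le_trans h1 hu.2
      linarith [h2]
    · have h1 := hφlow a (ρ u) hh
      rw [hφρ, hφa, zero_sub] at h1
      rw [abs_of_nonpos (by linarith)]
      rw [hT, le_div_iff₀ hcopos]
      have h2 : co * (a - ρ u) ≤ r₀ := by
        have h3 : -u ≤ r₀ := by linarith [hu.1]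
        linarith
      linarith [h2]
  have hden : ∀ t, |t - a| ≤ T → (2 * co)⁻¹ ≤ co + si * p t := by
    intro t hta
    have hptm : |p t - m| ≤ (1 + |m|) / 4 := by
      rcases eq_or_ne t a with rfl | hne
      · rw [hm, sub_self, abs_zero]
        positivity
      · have h1 := hmod a t (Ne.symm hne)
        have h2 : (0:ℝ) < |t - a| := abs_pos.2 (sub_ne_zero.2 hne)
        have h3 : ℓ |t - a| ≤ ℓ T := by
          rcases eq_or_lt_of_le hta with heq | hlt
          · rw [heq]
          · exact hmono _ _ h2 hta
        have hTform : T = co⁻¹ * r₀ := by rw [hT, div_eq_inv_mul]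
        have h4 : ℓ T ≤ c * co⁻¹ * ℓ r₀ := by
          rw [hTform]
          exact hscale co⁻¹ r₀ hinvge1 hr₀
        have h5 : c * co⁻¹ * ℓ r₀ ≤ c * co⁻¹ * (1 / (4 * A * c)) := by
          apply mul_le_mul_of_nonneg_left hδ (by positivity)
        have h6 : c * co⁻¹ * (1 / (4 * A * c)) = co⁻¹ / (4 * A) := by
          field_simp [hA0.ne', hc0.ne']
        have h7 : co⁻¹ ≤ 1 + |m| := hinvle
        have h8 : ℓ |t - a| ≤ co⁻¹ / (4 * A) := by
          rw [← h6]; exact le_trans h3 (le_trans h4 h5)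
        calc |p t - m| ≤ A * ℓ |t - a| := by rw [hm]; exact h1
          _ ≤ A * (co⁻¹ / (4 * A)) := mul_le_mul_of_nonneg_left h8 hA0.le
          _ = co⁻¹ / 4 := by field_simp [hA0.ne']
          _ ≤ (1 + |m|) / 4 := by linarith
    exact auxDen hcopos hco2 hsi hptm
  have hmonoI : MonotoneOn (fun t => φ t - (2 * co)⁻¹ * t) (Icc (a - T) (a + T)) := by
    apply monotoneOn_of_hasDerivWithinAt_nonneg (convex_Icc _ _)
      (f' := fun t => co + si * p t - (2 * co)⁻¹)
    · exact (hφcont.sub (continuous_const.mul continuous_id)).continuousOn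
    · intro x hx
      have h1 := (hφd x).sub (((hasDerivAt_id x).const_mul (2 * co)⁻¹))
      have h2 : co + si * p x - (2 * co)⁻¹ = co + si * p x - (2 * co)⁻¹ * 1 := by ring
      rw [h2]
      exact h1.hasDerivWithinAt
    · intro x hx
      rw [interior_Icc] at hx
      have h1 : |x - a| ≤ T := abs_le.2 ⟨by linarith [hx.1], by linarith [hx.2]⟩
      have h2 := hden x h1
      linarith
  have hexp2 : ∀ u v, u ∈ Icc (-r₀) r₀ → v ∈ Icc (-r₀) r₀ → |ρ u - ρ v| ≤ 2 * co * |u - v| := by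
    have hss : ∀ u v, v ≤ u → u ∈ Icc (-r₀) r₀ → v ∈ Icc (-r₀) r₀ →
        ρ u - ρ v ≤ 2 * co * (u - v) := by
      intro u v hvu hu hv
      have htu : ρ u ∈ Icc (a - T) (a + T) := by
        have h1 := abs_le.1 (hrange u hu)
        exact ⟨by linarith [h1.1], by linarith [h1.2]⟩
      have htv : ρ v ∈ Icc (a - T) (a + T) := by
        have h1 := abs_le.1 (hrange v hv)
        exact ⟨by linarith [h1.1], by linarith [h1.2]⟩
      have h1 : ρ v ≤ ρ u := hρmono hvu
      have h2 := hmonoI htv htu h1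
      simp only at h2
      rw [hφρ, hφρ] at h2
      have h3 : (2 * co)⁻¹ * (ρ u - ρ v) ≤ u - v := by linarith
      have h2cone : (2 * co) ≠ 0 := by positivity
      calc ρ u - ρ v = 2 * co * ((2 * co)⁻¹ * (ρ u - ρ v)) := by
            rw [← mul_assoc, mul_inv_cancel₀ h2cone, one_mul]
        _ ≤ 2 * co * (u - v) := mul_le_mul_of_nonneg_left h3 (by linarith)
    intro u v hu hv
    rcases le_total v u with hvu | huv
    · rw [abs_of_nonneg (sub_nonneg.2 (hρmono hvu)), abs_of_nonneg (sub_nonneg.2 hvu)]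
      exact hss u v hvu hu hv
    · rw [abs_of_nonpos (sub_nonpos.2 (hρmono huv)), abs_of_nonpos (sub_nonpos.2 huv)]
      have := hss v u huv hv hu
      linarith
  -- the modulus of continuity of q
  have hqmod : ∀ u v : ℝ, u ≠ v → |q u - q v| ≤ 8 * c * A * ℓ |u - v| := by
    intro u v huv
    have huv0 : (0:ℝ) < |u - v| := abs_pos.2 (sub_ne_zero.2 huv)
    have hluv := hpos _ huv0
    have hqu : q u = k (ρ (clamp u)) := by simp only [hq]
    have hqv : q v = k (ρ (clamp v)) := by simp only [hq]
    rcases eq_or_ne (ρ (clamp u)) (ρ (clamp v)) with hteq | htne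
    · rw [hqu, hqv, hteq, sub_self, abs_zero]
      positivity
    · set t := ρ (clamp u) with htdef
      set t' := ρ (clamp v) with htdef'
      have hd1 : |t - t'| ≤ 2 * co * |clamp u - clamp v| :=
        hexp2 (clamp u) (clamp v) (hclamp_mem u) (hclamp_mem v)
      have hd2 : |clamp u - clamp v| ≤ |u - v| := hclamp_lip u v
      have htt0 : (0:ℝ) < |t - t'| := abs_pos.2 (sub_ne_zero.2 htne)
      have h2co : 2 * co * |clamp u - clamp v| ≤ 2 * |u - v| :=
        auxMul hcopos hcole (abs_nonneg _) hd2
      have hl1 : ℓ |t - t'| ≤ ℓ (2 * |u - v|) := hmono _ _ htt0 (by linarith)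
      have hl2 : ℓ (2 * |u - v|) ≤ c * 2 * ℓ |u - v| := hscale 2 _ one_le_two huv0
      have hDt : (2 * co)⁻¹ ≤ co + si * p t := hden t (hrange (clamp u) (hclamp_mem u))
      have hDt' : (2 * co)⁻¹ ≤ co + si * p t' := hden t' (hrange (clamp v) (hclamp_mem v))
      have hpt := hφpos t
      have hpt' := hφpos t'
      have hnum : (co * p t - si) * (co + si * p t') - (co + si * p t) * (co * p t' - si)
          = p t - p t' := by linear_combination (p t - p t') * hcs
      have hkd : k t - k t' = (p t - p t') / ((co + si * p t) * (co + si * p t')) := by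
        simp only [hk]
        rw [div_sub_div _ _ hpt.ne' hpt'.ne', hnum]
      have hpmod : |p t - p t'| ≤ A * ℓ |t - t'| := hmod t' t (Ne.symm htne)
      have habs2 : |k t - k t'| = |p t - p t'| / ((co + si * p t) * (co + si * p t')) := by
        rw [hkd, abs_div, abs_of_pos (mul_pos hpt hpt')]
      have hco2pos : (0:ℝ) < (2 * co)⁻¹ := inv_pos.2 (by linarith)
      have hquot : |p t - p t'| / ((co + si * p t) * (co + si * p t'))
          ≤ |p t - p t'| * (2 * co) ^ 2 := by
        rw [div_le_iff₀ (mul_pos hpt hpt')]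
        have hg : (1:ℝ) ≤ (2 * co) ^ 2 * ((co + si * p t) * (co + si * p t')) := by
          have h2cone : (2 * co) ≠ 0 := by positivity
          have e1 : (2*co)^2 * ((2*co)⁻¹ * (2*co)⁻¹) = 1 := by
            field_simp
          have e2 : (2*co)⁻¹ * (2*co)⁻¹ ≤ (co + si * p t) * (co + si * p t') :=
            mul_le_mul hDt hDt' hco2pos.le hpt.le
          calc (1:ℝ) = (2*co)^2 * ((2*co)⁻¹ * (2*co)⁻¹) := e1.symm
            _ ≤ (2 * co) ^ 2 * ((co + si * p t) * (co + si * p t')) :=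
                mul_le_mul_of_nonneg_left e2 (sq_nonneg _)
        calc |p t - p t'| = |p t - p t'| * 1 := (mul_one _).symm
          _ ≤ |p t - p t'| * ((2 * co) ^ 2 * ((co + si * p t) * (co + si * p t'))) :=
              mul_le_mul_of_nonneg_left hg (abs_nonneg _)
          _ = |p t - p t'| * (2 * co) ^ 2 * ((co + si * p t) * (co + si * p t')) := by ring
      have hfin : |p t - p t'| * (2 * co) ^ 2 ≤ 8 * c * A * ℓ |u - v| := by
        have e3 : A * ℓ |t - t'| ≤ A * (c * 2 * ℓ |u - v|) :=
          mul_le_mul_of_nonneg_left (le_trans hl1 hl2) hA0.le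
        have e4 : |p t - p t'| ≤ 2 * c * A * ℓ |u - v| := by
          calc |p t - p t'| ≤ A * ℓ |t - t'| := hpmod
            _ ≤ A * (c * 2 * ℓ |u - v|) := e3
            _ = 2 * c * A * ℓ |u - v| := by ring
        exact auxFin (abs_nonneg _) (hpos _ huv0).le hc0 hA0 (auxSq hcopos hcole)
          (sq_nonneg _) e4
      rw [hqu, hqv, habs2]
      exact le_trans hquot hfin
  refine ⟨co, si, hcs, hcopos, G, hcontDiffG, hG0, hdG0, ?_, ?_⟩
  · intro u v huv
    rw [hderivG]
    exact hqmod u v huv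
  · intro y1 yd hy1
    have hy1' : y1 ∈ Icc (-r₀) r₀ := abs_le.1 hy1
    have hw : G y1 = -si * (ρ y1 - a) + co * (h (ρ y1) - h a) := hGeq y1 hy1'
    have hφt : co * (ρ y1 - a) + si * (h (ρ y1) - h a) = y1 := hφρ y1
    have e1 : a + co * y1 - si * G y1 = ρ y1 := by
      linear_combination (-si) * hw - co * hφt + (ρ y1 - a) * hcs
    have e2 : h a + si * y1 + co * G y1 = h (ρ y1) := by
      linear_combination co * hw - si * hφt + (h (ρ y1) - h a) * hcs
    have hF : StrictMono (fun z : ℝ => (h a + si * y1 + co * z) - h (a + co * y1 - si * z)) := by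
      apply strictMono_of_hasDerivAt_pos
        (f' := fun z => co + si * p (a + co * y1 - si * z))
      · intro x
        have hinner : HasDerivAt (fun z : ℝ => a + co * y1 - si * z) (-si) x := by
          have h1 : (fun z : ℝ => a + co * y1 - si * z)
              = fun z : ℝ => (a + co * y1) + (-si) * z := by funext z; ring
          rw [h1]
          have h2 := ((hasDerivAt_id x).const_mul (-si)).const_add (a + co * y1)
          simpa using h2
        have houter := (hderiv (a + co * y1 - si * x)).comp x hinner
        have hlin : HasDerivAt (fun z : ℝ => h a + si * y1 + co * z) co x := by
          have h2 := ((hasDerivAt_id x).const_mul co).const_add (h a + si * y1)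
          simpa using h2
        have h3 := hlin.sub houter
        have h4 : co + si * p (a + co * y1 - si * x)
            = co - p (a + co * y1 - si * x) * (-si) := by ring
        rw [h4]
        exact h3
      · intro x
        exact hφpos _
    constructor
    · intro hlt
      by_contra hcon
      push_neg at hcon
      have h1 : (fun z : ℝ => (h a + si * y1 + co * z) - h (a + co * y1 - si * z)) yd
          ≤ (fun z : ℝ => (h a + si * y1 + co * z) - h (a + co * y1 - si * z)) (G y1) :=
        hF.monotone hcon
      simp only at h1
      rw [e1, e2] at h1
      simp only [sub_self] at h1
      linarith
    · intro hlt
      have h1 := hF hlt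
      simp only at h1
      rw [e1, e2] at h1
      simp only [sub_self] at h1
      linarith

lemma euclid_abs_coord_le {n : ℕ} (y : EuclideanSpace ℝ (Fin n)) (i : Fin n) : |y i| ≤ ‖y‖ := by
  rw [EuclideanSpace.norm_eq]
  have h : |y i| = Real.sqrt (‖y i‖ ^ 2) := by
    rw [Real.norm_eq_abs, sq_abs, Real.sqrt_sq_eq_abs]
  rw [h]
  apply Real.sqrt_le_sqrt
  exact Finset.single_le_sum (fun j _ => sq_nonneg ‖y j‖) (Finset.mem_univ i)

noncomputable def rotFun {n : ℕ} (i0 il : Fin n) (co si : ℝ)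
    (y : EuclideanSpace ℝ (Fin n)) : EuclideanSpace ℝ (Fin n) :=
  WithLp.toLp 2 (fun i => if i = i0 then co * y i0 - si * y il else if i = il then si * y i0 + co * y il else y i)

lemma rotFun_apply0 {n : ℕ} (i0 il : Fin n) (co si : ℝ) (y : EuclideanSpace ℝ (Fin n)) :
    rotFun i0 il co si y i0 = co * y i0 - si * y il := by simp [rotFun]

lemma rotFun_applyl {n : ℕ} {i0 il : Fin n} (hne : i0 ≠ il) (co si : ℝ)
    (y : EuclideanSpace ℝ (Fin n)) :
    rotFun i0 il co si y il = si * y i0 + co * y il := by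
  simp [rotFun, hne.symm]

lemma rotFun_apply_other {n : ℕ} {i0 il i : Fin n} (h0 : i ≠ i0) (hl : i ≠ il) (co si : ℝ)
    (y : EuclideanSpace ℝ (Fin n)) :
    rotFun i0 il co si y i = y i := by simp [rotFun, h0, hl]

noncomputable def rotIso {n : ℕ} (i0 il : Fin n) (hne : i0 ≠ il) (co si : ℝ)
    (hcs : co ^ 2 + si ^ 2 = 1) :
    EuclideanSpace ℝ (Fin n) ≃ₗᵢ[ℝ] EuclideanSpace ℝ (Fin n) where
  toFun := rotFun i0 il co si
  invFun := rotFun i0 il co (-si)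
  map_add' x y := by
    ext i
    simp only [rotFun, PiLp.add_apply, PiLp.toLp_apply]
    split_ifs <;> ring
  map_smul' r x := by
    ext i
    simp only [rotFun, PiLp.smul_apply, smul_eq_mul, RingHom.id_apply, PiLp.toLp_apply]
    split_ifs <;> ring
  left_inv y := by
    show rotFun i0 il co (-si) (rotFun i0 il co si y) = y
    ext i
    rcases eq_or_ne i i0 with rfl | h0
    · rw [rotFun_apply0, rotFun_apply0, rotFun_applyl hne]
      linear_combination y i * hcs
    rcases eq_or_ne i il with rfl | hl
    · rw [rotFun_applyl hne, rotFun_apply0, rotFun_applyl hne]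
      linear_combination y i * hcs
    · rw [rotFun_apply_other h0 hl, rotFun_apply_other h0 hl]
  right_inv y := by
    show rotFun i0 il co si (rotFun i0 il co (-si) y) = y
    ext i
    rcases eq_or_ne i i0 with rfl | h0
    · rw [rotFun_apply0, rotFun_apply0, rotFun_applyl hne]
      linear_combination y i * hcs
    rcases eq_or_ne i il with rfl | hl
    · rw [rotFun_applyl hne, rotFun_apply0, rotFun_applyl hne]
      linear_combination y i * hcs
    · rw [rotFun_apply_other h0 hl, rotFun_apply_other h0 hl]
  norm_map' y := by
    show ‖rotFun i0 il co si y‖ = ‖y‖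
    rw [EuclideanSpace.norm_eq, EuclideanSpace.norm_eq]
    congr 1
    have hsub : ({i0, il} : Finset (Fin n)) ⊆ Finset.univ := Finset.subset_univ _
    rw [← Finset.sum_sdiff hsub, ← Finset.sum_sdiff hsub]
    congr 1
    · apply Finset.sum_congr rfl
      intro i hi
      rw [Finset.mem_sdiff, Finset.mem_insert, Finset.mem_singleton] at hi
      push_neg at hi
      rw [rotFun_apply_other hi.2.1 hi.2.2]
    · rw [Finset.sum_pair hne, Finset.sum_pair hne, rotFun_apply0, rotFun_applyl hne]
      simp only [Real.norm_eq_abs, sq_abs]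
      linear_combination ((y i0) ^ 2 + (y il) ^ 2) * hcs

lemma frontier_graph {d : ℕ} (h0 : 0 < d) (hd : 2 ≤ d) (f : ℝ → ℝ) (hf : Continuous f) :
    frontier {x : EuclideanSpace ℝ (Fin d) | f (x ⟨0, h0⟩) < x ⟨d - 1, Nat.sub_lt h0 Nat.one_pos⟩}
      = {x | x ⟨d - 1, Nat.sub_lt h0 Nat.one_pos⟩ = f (x ⟨0, h0⟩)} := by
  set i0 : Fin d := ⟨0, h0⟩
  set il : Fin d := ⟨d - 1, Nat.sub_lt h0 Nat.one_pos⟩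
  have hne : i0 ≠ il := by
    simp only [i0, il, ne_eq, Fin.mk.injEq]
    omega
  have hc0 : Continuous fun x : EuclideanSpace ℝ (Fin d) => f (x i0) :=
    hf.comp (EuclideanSpace.proj i0).continuous
  have hcl : Continuous fun x : EuclideanSpace ℝ (Fin d) => x il :=
    (EuclideanSpace.proj il).continuous
  apply Subset.antisymm
  · have := frontier_lt_subset_eq hc0 hcl
    intro x hx
    exact (this hx).symm
  · intro x hx
    have hxe : x il = f (x i0) := hx
    have hopen : IsOpen {y : EuclideanSpace ℝ (Fin d) | f (y i0) < y il} := isOpen_lt hc0 hcl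
    rw [frontier, hopen.interior_eq]
    constructor
    · -- closure
      have hseq : Tendsto (fun t : ℝ => x + t • EuclideanSpace.single il (1:ℝ)) (𝓝[>] 0)
          (𝓝 x) := by
        have h1 : Tendsto (fun t : ℝ => x + t • EuclideanSpace.single il (1:ℝ)) (𝓝 0)
            (𝓝 (x + (0:ℝ) • EuclideanSpace.single il (1:ℝ))) := by
          apply Tendsto.const_add
          exact (continuous_id.smul continuous_const).tendsto 0
        rw [zero_smul, add_zero] at h1
        exact h1.mono_left nhdsWithin_le_nhds
      apply mem_closure_of_tendsto hseq
      filter_upwards [self_mem_nhdsWithin] with t ht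
      have htpos : (0:ℝ) < t := ht
      have hcoord0 : (x + t • EuclideanSpace.single il (1:ℝ)) i0 = x i0 := by
        simp [EuclideanSpace.single_apply, hne]
      have hcoordl : (x + t • EuclideanSpace.single il (1:ℝ)) il = x il + t := by
        simp [EuclideanSpace.single_apply]
      simp only [mem_setOf_eq, hcoord0, hcoordl, hxe]
      linarith
    · -- not in the open set
      simp only [mem_compl_iff, mem_setOf_eq, hxe, not_lt]
      exact le_refl _

set_option maxHeartbeats 1000000 in
theorem stmt_18 (d : ℕ) (hd : 2 ≤ d) (ℓ : ℝ → ℝ)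
    (hpos : ∀ r : ℝ, 0 < r → 0 < ℓ r)
    (hmono : ∀ s r : ℝ, 0 < s → s ≤ r → ℓ s ≤ ℓ r)
    (hlim : Filter.Tendsto ℓ (nhdsWithin 0 (Set.Ioi 0)) (nhds 0))
    (c : ℝ) (hc : 1 ≤ c)
    (halmost : ∀ s r : ℝ, 0 < s → s ≤ r → ℓ r / r ≤ c * (ℓ s / s))
    (hdiff1 : ∀ r : ℝ, 0 < r → DifferentiableAt ℝ ℓ r)
    (hdiff2 : ∀ r : ℝ, 0 < r → DifferentiableAt ℝ (deriv ℓ) r)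
    (Creg : ℝ) (hCreg : 0 < Creg)
    (hreg : ∀ r : ℝ, 0 < r → r * deriv ℓ r + |r ^ 2 * deriv (deriv ℓ) r| ≤ Creg * ℓ r) :
    ∃ R₀ Λ : ℝ, R₀ ∈ Set.Ioc (0 : ℝ) 1 ∧ 0 < Λ ∧
      ∀ D : Set (EuclideanSpace ℝ (Fin d)),
        (D = Dp d (by omega) ℓ ∨ D = Dm d (by omega) ℓ) →
        ∀ Q ∈ frontier D,
          ∃ (Γ : EuclideanSpace ℝ (Fin (d - 1)) → ℝ)
            (Φ : EuclideanSpace ℝ (Fin d) ≃ᵃⁱ[ℝ] EuclideanSpace ℝ (Fin d)),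
            ContDiff ℝ 1 Γ ∧ Γ 0 = 0 ∧ fderiv ℝ Γ 0 = 0 ∧
            (∀ u v : EuclideanSpace ℝ (Fin (d - 1)), u ≠ v →
              ‖fderiv ℝ Γ u - fderiv ℝ Γ v‖ ≤ Λ * ℓ (dist u v)) ∧
            Φ 0 = Q ∧
            D ∩ ball Q R₀ =
              Φ '' {y : EuclideanSpace ℝ (Fin d) |
                y ∈ ball (0 : EuclideanSpace ℝ (Fin d)) R₀ ∧
                Γ (WithLp.toLp 2 (fun i : Fin (d - 1) => y (Fin.castLE (Nat.sub_le d 1) i)) :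
                    EuclideanSpace ℝ (Fin (d - 1))) < y ⟨d - 1, by omega⟩} := by
  have hc0 : (0:ℝ) < c := lt_of_lt_of_le one_pos hc
  set A : ℝ := (1 + Creg) * (1 + 2 * c) + 3 * Creg * c with hAdef
  have hA1 : 1 ≤ A := by nlinarith
  have hA0 : 0 < A := lt_of_lt_of_le one_pos hA1
  have hscale := ell_scale halmost
  have hmodg := pg_modulus hpos hmono hc halmost hdiff1 hdiff2 hCreg hreg
  have hgd := gEll_hasDerivAt hpos hlim hdiff1
  have hpgnn := pg_nonneg hpos hmono hdiff1
  obtain ⟨δ, hδ0, hδs⟩ := ell_small hlim (show (0:ℝ) < 1 / (4 * A * c) by positivity)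
  set r₀ : ℝ := min (δ / 2) 1 with hr₀def
  have hr₀pos : 0 < r₀ := lt_min (by linarith) one_pos
  have hr₀le1 : r₀ ≤ 1 := min_le_right _ _
  have hℓr₀ : ℓ r₀ ≤ 1 / (4 * A * c) :=
    (hδs r₀ hr₀pos (lt_of_le_of_lt (min_le_left _ _) (by linarith))).le
  have hΛ0 : (0:ℝ) < 8 * c * A := by positivity
  refine ⟨r₀, 8 * c * A, ⟨hr₀pos, hr₀le1⟩, hΛ0, ?_⟩
  intro D hD Q hQ
  have h0d : 0 < d := by omega
  set i0 : Fin d := ⟨0, h0d⟩ with hi0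
  set il : Fin d := ⟨d - 1, Nat.sub_lt h0d Nat.one_pos⟩ with hil
  have hne : i0 ≠ il := by
    simp only [hi0, hil, ne_eq, Fin.mk.injEq]
    omega
  -- continuity of gEll
  have hgcont : Continuous (gEll ℓ) := by
    rw [continuous_iff_continuousAt]
    exact fun t => (hgd t).differentiableAt.continuousAt
  -- uniform treatment of the two cases
  obtain ⟨σ, hσ1, hDmem⟩ : ∃ σ : ℝ, (σ = 1 ∨ σ = -1) ∧
      D = {x : EuclideanSpace ℝ (Fin d) | σ * gEll ℓ (x i0) < x il} := by
    rcases hD with rfl | rfl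
    · refine ⟨1, Or.inl rfl, ?_⟩
      ext x
      simp only [Dp, Set.mem_setOf_eq, one_mul]
      exact Iff.rfl
    · refine ⟨-1, Or.inr rfl, ?_⟩
      ext x
      simp only [Dm, Set.mem_setOf_eq, neg_mul, one_mul]
      exact Iff.rfl
  have hσsq : σ * σ = 1 := by rcases hσ1 with rfl | rfl <;> norm_num
  have hσabs : |σ| = 1 := by rcases hσ1 with rfl | rfl <;> norm_num
  set h : ℝ → ℝ := fun t => σ * gEll ℓ t with hh
  set ph : ℝ → ℝ := fun t => σ * pg ℓ t with hph
  have hhd : ∀ t, HasDerivAt h (ph t) t := fun t => (hgd t).const_mul σ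
  have hhsign : ∀ t t', 0 ≤ ph t * ph t' := by
    intro t t'
    have h1 : ph t * ph t' = (σ * σ) * (pg ℓ t * pg ℓ t') := by simp only [hph]; ring
    rw [h1, hσsq, one_mul]
    exact mul_nonneg (hpgnn t) (hpgnn t')
  have hhmod : ∀ s t : ℝ, s ≠ t → |ph t - ph s| ≤ A * ℓ |t - s| := by
    intro s t hst
    have h1 : ph t - ph s = σ * (pg ℓ t - pg ℓ s) := by simp only [hph]; ring
    rw [h1, abs_mul, hσabs, one_mul, hAdef]
    exact hmodg s t hst
  -- the boundary relation
  have hfr : Q il = h (Q i0) := by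
    have hcont : Continuous (fun t : ℝ => σ * gEll ℓ t) := continuous_const.mul hgcont
    have hfg := frontier_graph h0d hd _ hcont
    rw [hDmem] at hQ
    have : {x : EuclideanSpace ℝ (Fin d) | σ * gEll ℓ (x i0) < x il}
        = {x : EuclideanSpace ℝ (Fin d) |
            (fun t : ℝ => σ * gEll ℓ t) (x ⟨0, h0d⟩) < x ⟨d - 1, Nat.sub_lt h0d Nat.one_pos⟩} := rfl
    rw [this, hfg] at hQ
    exact hQ
  obtain ⟨co, si, hcs, hcopos, G, hGC, hG0, hdG0, hGmod, hGiff⟩ :=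
    key_graph hpos hmono hlim hc hscale hA1 hr₀pos hℓr₀ h ph hhd hhsign hhmod (Q i0)
  have h0d1 : 0 < d - 1 := by omega
  set j0 : Fin (d - 1) := ⟨0, h0d1⟩ with hj0
  set Γ : EuclideanSpace ℝ (Fin (d - 1)) → ℝ := fun w => G (w j0) with hΓ
  set L := rotIso i0 il hne co si hcs with hLdef
  set Φ : EuclideanSpace ℝ (Fin d) ≃ᵃⁱ[ℝ] EuclideanSpace ℝ (Fin d) :=
    L.toAffineIsometryEquiv.trans (AffineIsometryEquiv.constVAdd ℝ _ Q) with hΦdef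
  have hΦap : ∀ y, Φ y = Q + rotFun i0 il co si y := by
    intro y
    simp only [hΦdef, AffineIsometryEquiv.coe_trans, Function.comp_apply,
      AffineIsometryEquiv.coe_constVAdd, vadd_eq_add]
    have h1 : L.toAffineIsometryEquiv y = rotFun i0 il co si y := rfl
    rw [h1]
  have hrot0 : rotFun i0 il co si 0 = 0 := L.map_zero
  have hΦ0 : Φ 0 = Q := by rw [hΦap, hrot0, add_zero]
  have hGdiff : Differentiable ℝ G := hGC.differentiable one_ne_zero
  have hΓfd : ∀ w, HasFDerivAt Γ
      (deriv G (w j0) • (EuclideanSpace.proj j0 : EuclideanSpace ℝ (Fin (d-1)) →L[ℝ] ℝ)) w := by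
    intro w
    have h1 : HasDerivAt G (deriv G (w j0)) (w j0) := (hGdiff (w j0)).hasDerivAt
    have h2 : HasFDerivAt (⇑(EuclideanSpace.proj j0 : EuclideanSpace ℝ (Fin (d-1)) →L[ℝ] ℝ))
        (EuclideanSpace.proj j0 : EuclideanSpace ℝ (Fin (d-1)) →L[ℝ] ℝ) w :=
      (EuclideanSpace.proj j0 : EuclideanSpace ℝ (Fin (d-1)) →L[ℝ] ℝ).hasFDerivAt
    exact h1.comp_hasFDerivAt w h2
  have hΓC : ContDiff ℝ 1 Γ := hGC.comp (EuclideanSpace.proj j0 : EuclideanSpace ℝ (Fin (d-1)) →L[ℝ] ℝ).contDiff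
  have hΓ0 : Γ 0 = 0 := by
    have : ((0 : EuclideanSpace ℝ (Fin (d-1))) j0) = 0 := rfl
    simp only [hΓ, this, hG0]
  have hfdΓ : ∀ w, fderiv ℝ Γ w
      = deriv G (w j0) • (EuclideanSpace.proj j0 : EuclideanSpace ℝ (Fin (d-1)) →L[ℝ] ℝ) :=
    fun w => (hΓfd w).fderiv
  have hΓd0 : fderiv ℝ Γ 0 = 0 := by
    rw [hfdΓ]
    have : ((0 : EuclideanSpace ℝ (Fin (d-1))) j0) = 0 := rfl
    rw [this, hdG0, zero_smul]
  have hπle : ‖(EuclideanSpace.proj j0 : EuclideanSpace ℝ (Fin (d-1)) →L[ℝ] ℝ)‖ ≤ 1 := by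
    apply ContinuousLinearMap.opNorm_le_bound _ zero_le_one
    intro w
    rw [one_mul, Real.norm_eq_abs]
    exact euclid_abs_coord_le w j0
  refine ⟨Γ, Φ, hΓC, hΓ0, hΓd0, ?_, hΦ0, ?_⟩
  · -- modulus of continuity of the gradient
    intro u v huv
    rw [hfdΓ, hfdΓ, ← sub_smul, norm_smul, Real.norm_eq_abs]
    have hdistpos : 0 < dist u v := dist_pos.2 huv
    have hldist := hpos _ hdistpos
    rcases eq_or_ne (u j0) (v j0) with he | hne2
    · rw [he, sub_self, abs_zero, zero_mul]
      positivity
    · have h1 := hGmod (u j0) (v j0) hne2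
      have h2 : |u j0 - v j0| ≤ dist u v := by
        rw [dist_eq_norm]
        have h3 := euclid_abs_coord_le (u - v) j0
        have h4 : (u - v) j0 = u j0 - v j0 := rfl
        rwa [h4] at h3
      have h3 : ℓ |u j0 - v j0| ≤ ℓ (dist u v) :=
        hmono _ _ (abs_pos.2 (sub_ne_zero.2 hne2)) h2
      calc |deriv G (u j0) - deriv G (v j0)| * ‖(EuclideanSpace.proj j0 :
              EuclideanSpace ℝ (Fin (d-1)) →L[ℝ] ℝ)‖
          ≤ |deriv G (u j0) - deriv G (v j0)| * 1 :=
            mul_le_mul_of_nonneg_left hπle (abs_nonneg _)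
        _ = |deriv G (u j0) - deriv G (v j0)| := mul_one _
        _ ≤ 8 * c * A * ℓ |u j0 - v j0| := h1
        _ ≤ 8 * c * A * ℓ (dist u v) := mul_le_mul_of_nonneg_left h3 hΛ0.le
  · -- the set equality
    have hcore : ∀ y : EuclideanSpace ℝ (Fin d), dist y 0 < r₀ →
        ((σ * gEll ℓ ((Φ y) i0) < (Φ y) il) ↔ G (y i0) < y il) := by
      intro y hy
      have hc0' : (Φ y) i0 = Q i0 + (co * y i0 - si * y il) := by
        rw [hΦap]
        have : (Q + rotFun i0 il co si y) i0 = Q i0 + rotFun i0 il co si y i0 := rfl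
        rw [this, rotFun_apply0]
      have hcl' : (Φ y) il = Q il + (si * y i0 + co * y il) := by
        rw [hΦap]
        have : (Q + rotFun i0 il co si y) il = Q il + rotFun i0 il co si y il := rfl
        rw [this, rotFun_applyl hne]
      have hy1 : |y i0| ≤ r₀ := by
        have h1 := euclid_abs_coord_le y i0
        rw [dist_zero_right] at hy
        linarith
      have hiff := hGiff (y i0) (y il) hy1
      have e1 : Q i0 + (co * y i0 - si * y il) = Q i0 + co * y i0 - si * y il := by ring
      have e2 : Q il + (si * y i0 + co * y il) = h (Q i0) + si * y i0 + co * y il := by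
        rw [hfr]; ring
      rw [hc0', hcl', e1, e2]
      have e3 : σ * gEll ℓ (Q i0 + co * y i0 - si * y il)
          = h (Q i0 + co * y i0 - si * y il) := rfl
      rw [e3]
      exact hiff
    have hΓy : ∀ y : EuclideanSpace ℝ (Fin d),
        Γ (WithLp.toLp 2 (fun i : Fin (d - 1) => y (Fin.castLE (Nat.sub_le d 1) i)) :
            EuclideanSpace ℝ (Fin (d - 1))) = G (y i0) := by
      intro y
      simp only [hΓ]
      congr 1
    have hil' : (⟨d - 1, by omega⟩ : Fin d) = il := rfl
    rw [hDmem]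
    ext x
    simp only [Set.mem_inter_iff, Set.mem_setOf_eq, Set.mem_image, mem_ball]
    constructor
    · rintro ⟨hxD, hxB⟩
      refine ⟨Φ.symm x, ⟨?_, ?_⟩, Φ.apply_symm_apply x⟩
      · have h1 : dist (Φ (Φ.symm x)) (Φ 0) = dist (Φ.symm x) 0 := Φ.dist_map _ _
        rw [Φ.apply_symm_apply, hΦ0] at h1
        rw [← h1]
        exact hxB
      · have hyB : dist (Φ.symm x) 0 < r₀ := by
          have h1 : dist (Φ (Φ.symm x)) (Φ 0) = dist (Φ.symm x) 0 := Φ.dist_map _ _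
          rw [Φ.apply_symm_apply, hΦ0] at h1
          rw [← h1]
          exact hxB
        have h2 := (hcore (Φ.symm x) hyB).1
        rw [Φ.apply_symm_apply] at h2
        rw [hΓy]
        exact h2 hxD
    · rintro ⟨y, ⟨hyB, hyΓ⟩, rfl⟩
      have hyB' : dist y 0 < r₀ := hyB
      constructor
      · apply (hcore y hyB').2
        rw [hΓy] at hyΓ
        exact hyΓ
      · have h1 : dist (Φ y) (Φ 0) = dist y 0 := Φ.dist_map _ _
        rw [hΦ0] at h1
        rw [h1]
        exact hyB'
end
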